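/- arXiv:1204.6605 — 10 statements merged into one kernel-verified Lean document; each statement's English description precedes it below -/
import Mathlib

section
/- Let q(x,ξ) = (Ax)·x + 2(Bx)·ξ + (Cξ)·ξ, where A and C are symmetric complex n×n matrices and B is a complex n×n matrix, let κ : ℝⁿ → ℝⁿ be linear with κ² = 1, and assume the PT-symmetry condition conj(q(κx, −κᵗξ)) = q(x,ξ) for all (x,ξ) ∈ ℝⁿ×ℝⁿ. Then the fundamental matrix F of q satisfies conj(F) = −K F K, where K is the 2n×2n real block matrix [[κ, 0],[0, −κᵗ]]; equivalently, F = −(K∘C)∘F∘(K∘C), where C : ℂ^{2n} → ℂ^{2n} is componentwise complex conjugation. -/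
open Matrix

/-- The complex quadratic form `q(x,ξ) = (Ax)·x + 2(Bx)·ξ + (Cξ)·ξ` on `ℝⁿ × ℝⁿ`. -/
noncomputable def quadForm (n : ℕ) (A B C : Matrix (Fin n) (Fin n) ℂ)
    (x ξ : Fin n → ℝ) : ℂ :=
  (A *ᵥ fun j => (x j : ℂ)) ⬝ᵥ (fun j => (x j : ℂ)) +
    2 * ((B *ᵥ fun j => (x j : ℂ)) ⬝ᵥ (fun j => (ξ j : ℂ))) +
    (C *ᵥ fun j => (ξ j : ℂ)) ⬝ᵥ (fun j => (ξ j : ℂ))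

/-
The coefficients of `q` are recovered from its values on real points: `B` from
the mixed part, and the symmetric matrices `A`, `C` by polarization. Substituting
`(κx, −κᵗξ)` into `q` is again a form of this shape, with coefficients `κᵗAκ`, `−κBκ`,
`κCκᵗ`, while conjugating the values of `q` conjugates its coefficients. So PT-symmetry
says `conj A = κᵗAκ`, `conj B = −κBκ`, `conj C = κCκᵗ`, and these are exactly the
blocks of `conj F = −KFK`.
-/

section RealPoints

variable {ι : Type*}

noncomputable def ofRealVec (x : ι → ℝ) : ι → ℂ := fun j => (x j : ℂ)

@[simp]
lemma ofRealVec_zero : ofRealVec (0 : ι → ℝ) = 0 := by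
  funext j; simp [ofRealVec]

lemma ofRealVec_add (x y : ι → ℝ) : ofRealVec (x + y) = ofRealVec x + ofRealVec y := by
  funext j; simp [ofRealVec]

lemma ofRealVec_single [DecidableEq ι] (i : ι) : ofRealVec (Pi.single i 1) = Pi.single i 1 := by
  funext j; simp [ofRealVec, Pi.single_apply, apply_ite]

lemma conj_comp_ofRealVec (x : ι → ℝ) : starRingEnd ℂ ∘ ofRealVec x = ofRealVec x := by
  funext j; simp [ofRealVec]

variable [Fintype ι]

lemma ofRealVec_mulVec (P : Matrix ι ι ℝ) (x : ι → ℝ) :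
    ofRealVec (P *ᵥ x) = P.map (↑) *ᵥ ofRealVec x := by
  funext j; exact Complex.ofRealHom.map_mulVec P x j

lemma mulVec_dotProduct_mulVec {R : Type*} [CommSemiring R] (M P : Matrix ι ι R) (u v : ι → R) :
    (M *ᵥ u) ⬝ᵥ (P *ᵥ v) = ((Pᵀ * M) *ᵥ u) ⬝ᵥ v := by
  rw [dotProduct_mulVec, ← mulVec_transpose, mulVec_mulVec]

variable [DecidableEq ι]

lemma eq_zero_of_dotProduct_ofRealVec_eq_zero (M : Matrix ι ι ℂ)
    (h : ∀ x y : ι → ℝ, (M *ᵥ ofRealVec x) ⬝ᵥ ofRealVec y = 0) : M = 0 := by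
  ext i j
  simpa [ofRealVec_single, mulVec_single] using h (Pi.single j 1) (Pi.single i 1)

lemma eq_zero_of_isSymm_of_dotProduct_ofRealVec_self_eq_zero (M : Matrix ι ι ℂ) (hM : Mᵀ = M)
    (h : ∀ x : ι → ℝ, (M *ᵥ ofRealVec x) ⬝ᵥ ofRealVec x = 0) : M = 0 := by
  refine eq_zero_of_dotProduct_ofRealVec_eq_zero M fun x y => ?_
  have polarization : (M *ᵥ ofRealVec (x + y)) ⬝ᵥ ofRealVec (x + y)
      = (M *ᵥ ofRealVec x) ⬝ᵥ ofRealVec x + 2 * ((M *ᵥ ofRealVec x) ⬝ᵥ ofRealVec y)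
        + (M *ᵥ ofRealVec y) ⬝ᵥ ofRealVec y := by
    have hsymm : (M *ᵥ ofRealVec y) ⬝ᵥ ofRealVec x = (M *ᵥ ofRealVec x) ⬝ᵥ ofRealVec y := by
      rw [dotProduct_comm, dotProduct_mulVec, ← mulVec_transpose, hM]
    rw [ofRealVec_add, mulVec_add, add_dotProduct, dotProduct_add, dotProduct_add, hsymm]
    ring
  rw [h, h, h] at polarization
  simpa using polarization

end RealPoints

section QuadForm

variable {n : ℕ}

lemma quadForm_eq (A B C : Matrix (Fin n) (Fin n) ℂ) (x ξ : Fin n → ℝ) :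
    quadForm n A B C x ξ = (A *ᵥ ofRealVec x) ⬝ᵥ ofRealVec x
      + 2 * ((B *ᵥ ofRealVec x) ⬝ᵥ ofRealVec ξ) + (C *ᵥ ofRealVec ξ) ⬝ᵥ ofRealVec ξ := rfl

lemma quadForm_sub (A B C A' B' C' : Matrix (Fin n) (Fin n) ℂ) (x ξ : Fin n → ℝ) :
    quadForm n (A - A') (B - B') (C - C') x ξ = quadForm n A B C x ξ - quadForm n A' B' C' x ξ := by
  simp only [quadForm_eq, sub_mulVec, sub_dotProduct]
  ring

lemma conj_quadForm (A B C : Matrix (Fin n) (Fin n) ℂ) (x ξ : Fin n → ℝ) :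
    starRingEnd ℂ (quadForm n A B C x ξ)
      = quadForm n (A.map (starRingEnd ℂ)) (B.map (starRingEnd ℂ)) (C.map (starRingEnd ℂ)) x ξ := by
  have hconj : ∀ (M : Matrix (Fin n) (Fin n) ℂ) (x y : Fin n → ℝ),
      starRingEnd ℂ ((M *ᵥ ofRealVec x) ⬝ᵥ ofRealVec y)
        = (M.map (starRingEnd ℂ) *ᵥ ofRealVec x) ⬝ᵥ ofRealVec y := by
    intro M x y
    rw [RingHom.map_dotProduct, conj_comp_ofRealVec]
    congr 1
    funext i
    rw [Function.comp_apply, RingHom.map_mulVec, conj_comp_ofRealVec]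
  simp only [quadForm_eq, map_add, map_mul, hconj, map_ofNat]

lemma quadForm_mulVec_mulVec (A B C : Matrix (Fin n) (Fin n) ℂ) (P Q : Matrix (Fin n) (Fin n) ℝ)
    (x ξ : Fin n → ℝ) :
    quadForm n A B C (P *ᵥ x) (Q *ᵥ ξ)
      = quadForm n ((P.map (↑))ᵀ * A * P.map (↑)) ((Q.map (↑))ᵀ * B * P.map (↑))
          ((Q.map (↑))ᵀ * C * Q.map (↑)) x ξ := by
  simp only [quadForm_eq, ofRealVec_mulVec, mulVec_mulVec, mulVec_dotProduct_mulVec,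
    ← Matrix.mul_assoc]

lemma quadForm_eq_zero_iff {A B C : Matrix (Fin n) (Fin n) ℂ} (hA : Aᵀ = A) (hC : Cᵀ = C) :
    (∀ x ξ, quadForm n A B C x ξ = 0) ↔ A = 0 ∧ B = 0 ∧ C = 0 := by
  refine ⟨fun h => ?_, by rintro ⟨rfl, rfl, rfl⟩ x ξ; simp [quadForm_eq]⟩
  have hA0 : A = 0 := eq_zero_of_isSymm_of_dotProduct_ofRealVec_self_eq_zero A hA fun x => by
    simpa [quadForm_eq] using h x 0
  have hC0 : C = 0 := eq_zero_of_isSymm_of_dotProduct_ofRealVec_self_eq_zero C hC fun ξ => by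
    simpa [quadForm_eq] using h 0 ξ
  refine ⟨hA0, eq_zero_of_dotProduct_ofRealVec_eq_zero B fun x ξ => ?_, hC0⟩
  simpa [quadForm_eq, hA0, hC0] using h x ξ

lemma quadForm_injective {A B C A' B' C' : Matrix (Fin n) (Fin n) ℂ}
    (hA : Aᵀ = A) (hC : Cᵀ = C) (hA' : A'ᵀ = A') (hC' : C'ᵀ = C')
    (h : ∀ x ξ, quadForm n A B C x ξ = quadForm n A' B' C' x ξ) :
    A = A' ∧ B = B' ∧ C = C' := by
  have hsub := (quadForm_eq_zero_iff (A := A - A') (B := B - B') (C := C - C')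
    (by rw [transpose_sub, hA, hA']) (by rw [transpose_sub, hC, hC'])).mp
    fun x ξ => by rw [quadForm_sub, h, sub_self]
  simpa only [sub_eq_zero] using hsub

end QuadForm

theorem stmt_3_general (n : ℕ) (A B C : Matrix (Fin n) (Fin n) ℂ)
    (hA : Aᵀ = A) (hC : Cᵀ = C)
    (κ : Matrix (Fin n) (Fin n) ℝ)
    (hPT : ∀ x ξ : Fin n → ℝ,
        starRingEnd ℂ (quadForm n A B C (κ *ᵥ x) (-(κᵀ *ᵥ ξ))) = quadForm n A B C x ξ)
    (F : Matrix (Fin n ⊕ Fin n) (Fin n ⊕ Fin n) ℂ)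
    (hF : F = Matrix.fromBlocks B C (-A) (-Bᵀ))
    (K : Matrix (Fin n ⊕ Fin n) (Fin n ⊕ Fin n) ℂ)
    (hK : K = Matrix.fromBlocks (κ.map fun r => (r : ℂ)) 0 0 (-(κ.map fun r => (r : ℂ))ᵀ)) :
    F.map (starRingEnd ℂ) = -(K * F * K) := by
  set κc : Matrix (Fin n) (Fin n) ℂ := κ.map (↑)
  have hPT' : ∀ x ξ, quadForm n (κcᵀ * A * κc) (-(κc * B * κc)) (κc * C * κcᵀ) x ξ
      = quadForm n (A.map (starRingEnd ℂ)) (B.map (starRingEnd ℂ)) (C.map (starRingEnd ℂ)) x ξ := by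
    intro x ξ
    rw [← conj_quadForm, ← hPT, Complex.conj_conj, ← neg_mulVec, quadForm_mulVec_mulVec]
    simp [κc, Matrix.map_neg, transpose_map]
  obtain ⟨hAc, hBc, hCc⟩ := quadForm_injective
    (by rw [transpose_mul, transpose_mul, hA, transpose_transpose, Matrix.mul_assoc])
    (by rw [transpose_mul, transpose_mul, hC, transpose_transpose, Matrix.mul_assoc])
    (by rw [← transpose_map, hA]) (by rw [← transpose_map, hC]) hPT'
  rw [hF, hK, fromBlocks_map, fromBlocks_multiply, fromBlocks_multiply,
    Matrix.map_neg _ (map_neg _), Matrix.map_neg _ (map_neg _), transpose_map (M := B),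
    ← hAc, ← hBc, ← hCc]
  simp [Matrix.mul_assoc, fromBlocks_neg]

/-- under the PT-symmetry condition, the fundamental matrix
`F = [[B, C], [−A, −Bᵀ]]` of `q` satisfies `conj F = −K F K`, where
`K = [[κ, 0], [0, −κᵗ]]`. -/
theorem stmt_3 (n : ℕ) (A B C : Matrix (Fin n) (Fin n) ℂ)
    (hA : Aᵀ = A) (hC : Cᵀ = C)
    (κ : Matrix (Fin n) (Fin n) ℝ) (hκ : κ * κ = 1)
    (hPT : ∀ x ξ : Fin n → ℝ,
        starRingEnd ℂ (quadForm n A B C (κ *ᵥ x) (-(κᵀ *ᵥ ξ))) = quadForm n A B C x ξ)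
    (F : Matrix (Fin n ⊕ Fin n) (Fin n ⊕ Fin n) ℂ)
    (hF : F = Matrix.fromBlocks B C (-A) (-Bᵀ))
    (K : Matrix (Fin n ⊕ Fin n) (Fin n ⊕ Fin n) ℂ)
    (hK : K = Matrix.fromBlocks (κ.map fun r => (r : ℂ)) 0 0 (-(κ.map fun r => (r : ℂ))ᵀ)) :
    F.map (starRingEnd ℂ) = -(K * F * K) :=
  stmt_3_general n A B C hA hC κ hPT F hF K hK
end

section
/- Let A₊ be a symmetric complex n×n matrix whose entrywise imaginary part Im A₊ (a real symmetric matrix) is positive definite. Then the matrix I − iA₊ is invertible, and the matrix B := (I − iA₊)⁻¹ A₊ is symmetric and satisfies B = A₊ (I − iA₊)⁻¹. -/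
open Matrix
open scoped ComplexOrder

/-!
Put `M = 1 - iA₊`. Because `A₊` is symmetric, `A₊ᴴ = conj A₊` and hence
`M + Mᴴ = 2 (1 + Im A₊)`, which is positive definite. If `Mz = 0` then
`zᴴ (M + Mᴴ) z = zᴴMz + conj (zᴴMz) = 0`, so `z = 0` and `M` is invertible. Since `M` is a
polynomial in `A₊`, its inverse commutes with `A₊`, and transposing `M⁻¹A₊` with `Mᵀ = M`,
`A₊ᵀ = A₊` gives `A₊M⁻¹ = M⁻¹A₊`.
-/

namespace Matrix

theorem one_sub_I_smul_add_conjTranspose {n : Type*} [DecidableEq n] {A : Matrix n n ℂ}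
    (hA : Aᵀ = A) :
    (1 - Complex.I • A) + (1 - Complex.I • A)ᴴ =
      (2 : ℝ) • (1 + (of fun i j => (A i j).im).map (↑)) := by
  ext i j
  have hji : A j i = A i j := by rw [← transpose_apply A i j, hA]
  apply Complex.ext <;> by_cases hij : i = j <;>
    simp [hij, hji, Complex.mul_re, Complex.mul_im] <;> ring

variable {n : Type*} [Fintype n]

theorem isUnit_of_posDef_add_conjTranspose {K : Type*} [Field K] [PartialOrder K] [StarRing K]
    [DecidableEq n] {M : Matrix n n K} (h : (M + Mᴴ).PosDef) : IsUnit M := by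
  refine mulVec_injective_iff_isUnit.mp fun x y hxy => sub_eq_zero.mp ?_
  have hMz : M *ᵥ (x - y) = 0 := by rw [mulVec_sub, hxy, sub_self]
  by_contra hz
  have := h.dotProduct_mulVec_pos hz
  rw [add_mulVec, dotProduct_add, dotProduct_mulVec _ Mᴴ, ← star_mulVec, hMz] at this
  simp at this

theorem re_star_dotProduct_map_ofReal_mulVec {𝕜 : Type*} [RCLike 𝕜] (Y : Matrix n n ℝ)
    (z : n → 𝕜) :
    RCLike.re (star z ⬝ᵥ (Y.map (↑) *ᵥ z)) =
      (fun i => RCLike.re (z i)) ⬝ᵥ (Y *ᵥ fun i => RCLike.re (z i)) +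
        (fun i => RCLike.im (z i)) ⬝ᵥ (Y *ᵥ fun i => RCLike.im (z i)) := by
  simp only [dotProduct, mulVec, Finset.mul_sum, map_sum, ← Finset.sum_add_distrib]
  refine Finset.sum_congr rfl fun i _ => Finset.sum_congr rfl fun j _ => ?_
  simp [RCLike.mul_re, RCLike.mul_im]

theorem PosDef.map_ofReal {𝕜 : Type*} [RCLike 𝕜] {Y : Matrix n n ℝ} (hY : Y.PosDef) :
    (Y.map ((↑) : ℝ → 𝕜)).PosDef := by
  have hH : (Y.map ((↑) : ℝ → 𝕜)).IsHermitian :=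
    hY.isHermitian.map _ fun _ => (RCLike.conj_ofReal _).symm
  refine .of_dotProduct_mulVec_pos hH fun z hz =>
    RCLike.pos_iff.mpr ⟨?_, hH.im_star_dotProduct_mulVec_self z⟩
  rw [re_star_dotProduct_map_ofReal_mulVec]
  have hq (w : n → ℝ) : 0 ≤ w ⬝ᵥ (Y *ᵥ w) := by
    simpa using hY.posSemidef.dotProduct_mulVec_nonneg w
  have hq' (w : n → ℝ) (hw : w ≠ 0) : 0 < w ⬝ᵥ (Y *ᵥ w) := by
    simpa using hY.dotProduct_mulVec_pos hw
  by_cases hre : (fun i => RCLike.re (z i)) = 0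
  · have him : (fun i => RCLike.im (z i)) ≠ 0 := fun him => hz <| funext fun i =>
      RCLike.ext (by simpa using congrFun hre i) (by simpa using congrFun him i)
    linarith [hq (fun i => RCLike.re (z i)), hq' _ him]
  · linarith [hq' _ hre, hq (fun i => RCLike.im (z i))]

theorem commute_nonsing_inv_right {R : Type*} [CommRing R] [DecidableEq n]
    {A M : Matrix n n R} (h : Commute A M) : Commute A M⁻¹ := by
  rw [nonsing_inv_eq_ringInverse]
  by_cases hM : IsUnit M
  · obtain ⟨u, rfl⟩ := hM
    rw [Ring.inverse_unit]
    exact h.units_inv_right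
  · simp [Ring.inverse_non_unit _ hM]

end Matrix

/-- if `A₊` is a symmetric complex matrix with `Im A₊` positive definite,
then `I − iA₊` is invertible, and `B = (I − iA₊)⁻¹ A₊` is symmetric and also equals
`A₊ (I − iA₊)⁻¹`. -/
theorem stmt_6 (n : ℕ) (A : Matrix (Fin n) (Fin n) ℂ) (hA : Aᵀ = A)
    (hIm : (Matrix.of fun i j => (A i j).im).PosDef) :
    IsUnit (1 - Complex.I • A) ∧
    ((1 - Complex.I • A)⁻¹ * A)ᵀ = (1 - Complex.I • A)⁻¹ * A ∧
    (1 - Complex.I • A)⁻¹ * A = A * (1 - Complex.I • A)⁻¹ := by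
  set M := 1 - Complex.I • A
  have hU : IsUnit M := by
    refine isUnit_of_posDef_add_conjTranspose ?_
    rw [one_sub_I_smul_add_conjTranspose hA]
    exact (PosDef.one.add hIm.map_ofReal).smul two_pos
  have hcomm : Commute A M⁻¹ :=
    commute_nonsing_inv_right <| (Commute.one_right A).sub_right ((Commute.refl A).smul_right _)
  have hMT : Mᵀ = M := by simp [M, hA]
  refine ⟨hU, ?_, hcomm.eq.symm⟩
  rw [transpose_mul, transpose_nonsing_inv, hMT, hA, hcomm.eq]
end

section
/- Let A₊ be a symmetric complex n×n matrix with Im A₊ positive definite, and let B = (I − iA₊)⁻¹ A₊. Define the complex linear map κ_T : ℂ^{2n} → ℂ^{2n} by κ_T(y,η) = (y − iη, η + iBη − By). Then: (i) κ_T is symplectic, i.e. σ(κ_T Z, κ_T W) = σ(Z, W) for all Z, W ∈ ℂ^{2n}; (ii) κ_T maps the subspace Λ⁻ = {(y, −iy) : y ∈ ℂⁿ} bijectively onto {(x,ξ) ∈ ℂ^{2n} : x = 0}; and (iii) κ_T maps the subspace Λ⁺ = {(y, A₊y) : y ∈ ℂⁿ} bijectively onto {(x,ξ) ∈ ℂ^{2n}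 : ξ = 0}. -/
open Matrix

/-- The standard complex symplectic form `σ((x,ξ),(y,η)) = ξ·y − η·x` on `ℂ^{2n}`. -/
noncomputable def sigmaC (n : ℕ) (X Y : (Fin n → ℂ) × (Fin n → ℂ)) : ℂ :=
  ∑ j, X.2 j * Y.1 j - ∑ j, Y.2 j * X.1 j

/-!
`κ_T` is the shear `(y, η) ↦ (y − iη, η)` followed by the shear `(x, η) ↦ (x, η − Bx)`. Both are
injective and preserve `σ`, the second because `B = (I − iA₊)⁻¹A₊ = A₊(I − iA₊)⁻¹` is symmetric.
The first shear sends `(y, −iy)` to `(0, −iy)`, which the second fixes. With `M = I − iA₊` we have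
`BM = A₊`, so `κ_T(y, A₊y) = (My, 0)`, and everything hinges on `M` being invertible.
If `Mv = 0` then `v̄·v = i (v̄·A₊v)`, whose real part `−Im(v̄·A₊v)` is negative for `v ≠ 0`:
writing `v = p + iq`, symmetry of `A₊` gives `v̄·A₊v = p·A₊p + q·A₊q`, with imaginary part
`p·(Im A₊)p + q·(Im A₊)q > 0`.
-/

section ImaginaryPart

variable {ι : Type*} [Fintype ι]

theorem im_ofReal_dotProduct_mulVec_ofReal (A : Matrix ι ι ℂ) (p : ι → ℝ) :
    ((Complex.ofReal ∘ p) ⬝ᵥ A *ᵥ (Complex.ofReal ∘ p)).im = p ⬝ᵥ A.map Complex.im *ᵥ p := by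
  simp [dotProduct, mulVec, Complex.im_sum, Finset.mul_sum]

theorem star_dotProduct_mulVec_self_of_transpose_eq {A : Matrix ι ι ℂ} (hA : Aᵀ = A)
    (p q : ι → ℝ) :
    star (Complex.ofReal ∘ p + Complex.I • Complex.ofReal ∘ q) ⬝ᵥ
        A *ᵥ (Complex.ofReal ∘ p + Complex.I • Complex.ofReal ∘ q) =
      (Complex.ofReal ∘ p) ⬝ᵥ A *ᵥ (Complex.ofReal ∘ p)
        + (Complex.ofReal ∘ q) ⬝ᵥ A *ᵥ (Complex.ofReal ∘ q) := by
  have hstar : ∀ r : ι → ℝ, star (Complex.ofReal ∘ r) = Complex.ofReal ∘ r :=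
    fun r => funext fun i => Complex.conj_ofReal (r i)
  have hsymm : (Complex.ofReal ∘ p) ⬝ᵥ A *ᵥ (Complex.ofReal ∘ q)
      = (Complex.ofReal ∘ q) ⬝ᵥ A *ᵥ (Complex.ofReal ∘ p) := by
    rw [dotProduct_mulVec, ← mulVec_transpose, hA, dotProduct_comm]
  simp only [star_add, star_smul, hstar, Complex.star_def, Complex.conj_I, mulVec_add, mulVec_smul,
    dotProduct_add, add_dotProduct, dotProduct_smul, smul_dotProduct, smul_eq_mul, hsymm]
  ring_nf
  rw [Complex.I_sq]
  ring

theorem im_star_dotProduct_mulVec_self_pos {A : Matrix ι ι ℂ} (hA : Aᵀ = A)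
    (hIm : (A.map Complex.im).PosDef) {v : ι → ℂ} (hv : v ≠ 0) :
    0 < (star v ⬝ᵥ A *ᵥ v).im := by
  set p := Complex.re ∘ v
  set q := Complex.im ∘ v
  have hpq : Complex.ofReal ∘ p + Complex.I • Complex.ofReal ∘ q = v :=
    funext fun i => by simpa [p, q, mul_comm] using Complex.re_add_im (v i)
  have hnonneg (r : ι → ℝ) : 0 ≤ r ⬝ᵥ A.map Complex.im *ᵥ r :=
    hIm.posSemidef.dotProduct_mulVec_nonneg r
  have hpos {r : ι → ℝ} (hr : r ≠ 0) : 0 < r ⬝ᵥ A.map Complex.im *ᵥ r :=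
    hIm.dotProduct_mulVec_pos hr
  rw [← hpq, star_dotProduct_mulVec_self_of_transpose_eq hA, Complex.add_im,
    im_ofReal_dotProduct_mulVec_ofReal, im_ofReal_dotProduct_mulVec_ofReal]
  have hpq_ne : p ≠ 0 ∨ q ≠ 0 := by
    by_contra! h
    exact hv (by rw [← hpq, h.1, h.2]; simp)
  rcases hpq_ne with hp | hq
  · linarith [hpos hp, hnonneg q]
  · linarith [hnonneg p, hpos hq]

open scoped ComplexOrder in
theorem isUnit_one_sub_I_smul [DecidableEq ι] {A : Matrix ι ι ℂ} (hA : Aᵀ = A)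
    (hIm : (A.map Complex.im).PosDef) : IsUnit (1 - Complex.I • A) := by
  rw [isUnit_iff_isUnit_det, isUnit_iff_ne_zero, ne_eq, ← exists_mulVec_eq_zero_iff]
  rintro ⟨v, hv, hMv⟩
  have hv_eq : v = Complex.I • A *ᵥ v := by
    rwa [sub_mulVec, one_mulVec, smul_mulVec, sub_eq_zero] at hMv
  have hnorm : star v ⬝ᵥ v = Complex.I * (star v ⬝ᵥ A *ᵥ v) := by
    nth_rewrite 2 [hv_eq]
    rw [dotProduct_smul, smul_eq_mul]
  have hre := (Complex.nonneg_iff.1 (dotProduct_star_self_nonneg v)).1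
  rw [hnorm, Complex.mul_re, Complex.I_re, Complex.I_im] at hre
  linarith [im_star_dotProduct_mulVec_self_pos hA hIm hv]

end ImaginaryPart

theorem Commute.matrix_nonsing_inv_right {m R : Type*} [Fintype m] [DecidableEq m] [CommRing R]
    {A M : Matrix m m R} (h : Commute A M) (hM : IsUnit M) : Commute A M⁻¹ := by
  have := (hM.unit_spec ▸ h).units_inv_right
  rwa [coe_units_inv, hM.unit_spec] at this

section Cayley

variable {m R : Type*} [Fintype m] [DecidableEq m] [CommRing R] {A : Matrix m m R} (c : R)

theorem commute_one_sub_smul_self : Commute A (1 - c • A) :=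
  (Commute.one_right A).sub_right ((Commute.refl A).smul_right c)

theorem transpose_nonsing_inv_one_sub_smul_mul (hA : Aᵀ = A) (hM : IsUnit (1 - c • A)) :
    ((1 - c • A)⁻¹ * A)ᵀ = (1 - c • A)⁻¹ * A := by
  rw [transpose_mul, hA, transpose_nonsing_inv, transpose_sub, transpose_one, transpose_smul, hA]
  exact ((commute_one_sub_smul_self c).matrix_nonsing_inv_right hM).eq

theorem nonsing_inv_one_sub_smul_mul_mul_cancel (hM : IsUnit (1 - c • A)) :
    (1 - c • A)⁻¹ * A * (1 - c • A) = A := by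
  rw [Matrix.mul_assoc, (commute_one_sub_smul_self c).eq, ← Matrix.mul_assoc,
    nonsing_inv_mul _ ((isUnit_iff_isUnit_det _).1 hM), Matrix.one_mul]

end Cayley

section Shear

variable {n : ℕ}

def shearFst (c : ℂ) (p : (Fin n → ℂ) × (Fin n → ℂ)) : (Fin n → ℂ) × (Fin n → ℂ) :=
  (p.1 + c • p.2, p.2)

def shearSnd (S : Matrix (Fin n) (Fin n) ℂ) (p : (Fin n → ℂ) × (Fin n → ℂ)) :
    (Fin n → ℂ) × (Fin n → ℂ) :=
  (p.1, p.2 - S *ᵥ p.1)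

theorem sigmaC_eq_dotProduct (X Y : (Fin n → ℂ) × (Fin n → ℂ)) :
    sigmaC n X Y = X.2 ⬝ᵥ Y.1 - Y.2 ⬝ᵥ X.1 :=
  rfl

theorem sigmaC_shearFst (c : ℂ) (X Y : (Fin n → ℂ) × (Fin n → ℂ)) :
    sigmaC n (shearFst c X) (shearFst c Y) = sigmaC n X Y := by
  simp only [sigmaC_eq_dotProduct, shearFst, dotProduct_add, dotProduct_smul, smul_eq_mul,
    dotProduct_comm X.2 Y.2]
  ring

theorem sigmaC_shearSnd {S : Matrix (Fin n) (Fin n) ℂ} (hS : Sᵀ = S)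
    (X Y : (Fin n → ℂ) × (Fin n → ℂ)) :
    sigmaC n (shearSnd S X) (shearSnd S Y) = sigmaC n X Y := by
  have hsymm : S *ᵥ X.1 ⬝ᵥ Y.1 = S *ᵥ Y.1 ⬝ᵥ X.1 := by
    rw [dotProduct_comm, dotProduct_mulVec, ← mulVec_transpose, hS]
  simp only [sigmaC_eq_dotProduct, shearSnd, sub_dotProduct, hsymm]
  ring

theorem leftInverse_shearFst_neg (c : ℂ) :
    Function.LeftInverse (shearFst (n := n) (-c)) (shearFst c) := fun p => by
  simp [shearFst]

theorem leftInverse_shearSnd_neg (S : Matrix (Fin n) (Fin n) ℂ) :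
    Function.LeftInverse (shearSnd (-S)) (shearSnd S) := fun p => by
  simp [shearSnd, neg_mulVec]

theorem shearFst_injective (c : ℂ) : Function.Injective (shearFst (n := n) c) :=
  (leftInverse_shearFst_neg c).injective

theorem shearSnd_injective (S : Matrix (Fin n) (Fin n) ℂ) : Function.Injective (shearSnd S) :=
  (leftInverse_shearSnd_neg S).injective

end Shear

section Graph

variable {α β γ : Type*}

theorem Set.bijOn_setOf_snd_eq_range {f : α × β → γ} (hf : Function.Injective f) {g : α → β}
    {h : α → γ} (hfg : ∀ y, f (y, g y) = h y) : Set.BijOn f {p | p.2 = g p.1} (Set.range h) := by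
  have hgraph : {p : α × β | p.2 = g p.1} = Set.range fun y => (y, g y) := by
    ext ⟨x, ξ⟩
    simp [eq_comm]
  rw [hgraph, ← funext hfg, ← Function.comp_def f, Set.range_comp]
  exact hf.injOn.bijOn_image

theorem Set.range_const_prodMk_of_surjective {a : α} {h : γ → β} (hh : Function.Surjective h) :
    Set.range (fun y => (a, h y)) = {p | p.1 = a} := by
  ext ⟨x, ξ⟩
  refine ⟨?_, fun (hx : x = a) => ?_⟩
  · rintro ⟨y, hy⟩
    exact (congrArg Prod.fst hy).symm
  · obtain ⟨y, rfl⟩ := hh ξ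
    exact ⟨y, by rw [hx]⟩

theorem Set.range_prodMk_const_of_surjective {b : β} {h : γ → α} (hh : Function.Surjective h) :
    Set.range (fun y => (h y, b)) = {p | p.2 = b} := by
  ext ⟨x, ξ⟩
  refine ⟨?_, fun (hξ : ξ = b) => ?_⟩
  · rintro ⟨y, hy⟩
    exact (congrArg Prod.snd hy).symm
  · obtain ⟨y, rfl⟩ := hh x
    exact ⟨y, by rw [hξ]⟩

end Graph

/-- with `B = (I − iA₊)⁻¹A₊`, the map
`κ_T(y,η) = (y − iη, η + iBη − By)` is symplectic, maps `Λ⁻ = {(y,−iy)}` bijectively onto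
`{x = 0}` and `Λ⁺ = {(y, A₊y)}` bijectively onto `{ξ = 0}`. -/
theorem stmt_7 (n : ℕ) (A : Matrix (Fin n) (Fin n) ℂ) (hA : Aᵀ = A)
    (hIm : (Matrix.of fun i j => (A i j).im).PosDef)
    (B : Matrix (Fin n) (Fin n) ℂ) (hB : B = (1 - Complex.I • A)⁻¹ * A)
    (κT : (Fin n → ℂ) × (Fin n → ℂ) → (Fin n → ℂ) × (Fin n → ℂ))
    (hκT : ∀ p, κT p =
      (p.1 - Complex.I • p.2, p.2 + Complex.I • (B *ᵥ p.2) - B *ᵥ p.1)) :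
    (∀ Z W, sigmaC n (κT Z) (κT W) = sigmaC n Z W) ∧
    Set.BijOn κT {p : (Fin n → ℂ) × (Fin n → ℂ) | p.2 = (-Complex.I) • p.1}
      {p : (Fin n → ℂ) × (Fin n → ℂ) | p.1 = 0} ∧
    Set.BijOn κT {p : (Fin n → ℂ) × (Fin n → ℂ) | p.2 = A *ᵥ p.1}
      {p : (Fin n → ℂ) × (Fin n → ℂ) | p.2 = 0} := by
  have hM : IsUnit (1 - Complex.I • A) := isUnit_one_sub_I_smul hA hIm
  have hBT : Bᵀ = B := hB ▸ transpose_nonsing_inv_one_sub_smul_mul _ hA hM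
  have hBM : B * (1 - Complex.I • A) = A := hB ▸ nonsing_inv_one_sub_smul_mul_mul_cancel _ hM
  have hκ : κT = shearSnd B ∘ shearFst (-Complex.I) := by
    ext p : 1
    rw [hκT]
    simp only [Function.comp_apply, shearFst, shearSnd, neg_smul, ← sub_eq_add_neg, mulVec_sub,
      mulVec_smul]
    congr 1
    abel
  have hinj : Function.Injective κT := hκ ▸ (shearSnd_injective B).comp (shearFst_injective _)
  refine ⟨fun Z W => ?_, ?_, ?_⟩
  · simp only [hκ, Function.comp_apply, sigmaC_shearSnd hBT, sigmaC_shearFst]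
  · rw [← Set.range_const_prodMk_of_surjective (h := ((-Complex.I) • ·))
      fun ξ => ⟨Complex.I • ξ, by simp [smul_smul]⟩]
    refine Set.bijOn_setOf_snd_eq_range hinj fun y => ?_
    simp [hκ, shearFst, shearSnd, smul_smul]
  · rw [← Set.range_prodMk_const_of_surjective (mulVec_surjective_iff_isUnit.2 hM)]
    refine Set.bijOn_setOf_snd_eq_range hinj fun y => ?_
    have hMy : y + -Complex.I • A *ᵥ y = (1 - Complex.I • A) *ᵥ y := by
      rw [sub_mulVec, one_mulVec, smul_mulVec, neg_smul, sub_eq_add_neg]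
    simp only [hκ, Function.comp_apply, shearFst, shearSnd, hMy, mulVec_mulVec, hBM, sub_self]
end

section
/- Let Σ ⊂ ℂ^{2n} be a real-linear subspace of real dimension 2n with Σ ∩ iΣ = {0}, and suppose that σ takes real values on Σ × Σ and that the restriction of σ to Σ is nondegenerate. Let ι : ℂ^{2n} → ℂ^{2n} be the unique conjugate-linear map restricting to the identity on Σ. Let Λ ⊆ ℂ^{2n} be a complex Lagrangian plane, and define the Hermitian form b(ρ,μ) = (1/i)·σ(ρ, ι(μ)) on Λ × Λ. Then b is nondegenerate if and only if Λ ∩ Σ = {0}. -/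
/-!
`Σ` is a real form of `ℂ^{2n}`: by dimension count `ℂ^{2n} = Σ ⊕ iΣ`, so `ι` is the involution
`a + ic ↦ a - ic` whose fixed vectors are exactly `Σ`, and since `σ` is real on `Σ`,
`σ(ιX, ιY) = conj σ(X, Y)`. Hence for `v ∈ Λ ∩ Σ`, `b(v, μ) = -i conj σ(v, μ) = 0` on `Λ`.
Conversely, if `b(ρ, ·)` vanishes on `Λ` then `ιρ` is `σ`-orthogonal to `Λ`, so `ιρ ∈ Λ`
because a Lagrangian plane is its own `σ`-orthogonal. The `ι`-fixed vectors `ρ + ιρ` and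
`i(ρ - ιρ)` then lie in `Λ ∩ Σ = 0`, forcing `ρ = 0`.
-/

open Module Complex ComplexConjugate

section RealForm

variable {V : Type*} [AddCommGroup V] [Module ℂ V]

theorem exists_eq_add_I_smul [Module ℝ V] [IsScalarTower ℝ ℂ V] [FiniteDimensional ℂ V]
    {S : Submodule ℝ V} (hdim : finrank ℝ S = finrank ℂ V) (htot : ∀ v ∈ S, I • v ∈ S → v = 0)
    (v : V) : ∃ a ∈ S, ∃ c ∈ S, v = a + I • c := by
  have : FiniteDimensional ℝ V := .trans ℝ ℂ V
  let g : S × S →ₗ[ℝ] V := S.subtype.coprod (DistribSMul.toLinearMap ℝ V I ∘ₗ S.subtype)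
  have hg : Function.Injective g := by
    rw [← LinearMap.ker_eq_bot, Submodule.eq_bot_iff]
    rintro ⟨⟨a, ha⟩, ⟨c, hc⟩⟩ h
    have hac : a + I • c = 0 := h
    have hc0 : c = 0 := htot c hc (by rw [eq_neg_of_add_eq_zero_right hac]; exact S.neg_mem ha)
    subst hc0
    simp_all
  have hfin : finrank ℝ (S × S) = finrank ℝ V := by
    rw [Module.finrank_prod, hdim, ← Module.finrank_mul_finrank ℝ ℂ V,
      Complex.finrank_real_complex]
    ring
  obtain ⟨⟨⟨a, ha⟩, ⟨c, hc⟩⟩, h⟩ :=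
    (LinearMap.injective_iff_surjective_of_finrank_eq_finrank hfin).mp hg v
  exact ⟨a, ha, c, hc, h.symm⟩

theorem span_complex_eq_top_of_forall_eq_add_I_smul [Module ℝ V] {S : Submodule ℝ V}
    (hS : ∀ v : V, ∃ a ∈ S, ∃ c ∈ S, v = a + I • c) : Submodule.span ℂ (S : Set V) = ⊤ := by
  refine Submodule.eq_top_iff'.mpr fun v => ?_
  obtain ⟨a, ha, c, hc, rfl⟩ := hS v
  exact add_mem (Submodule.subset_span ha) (Submodule.smul_mem _ _ (Submodule.subset_span hc))

variable (ι : V →ₛₗ[starRingEnd ℂ] V)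

theorem involutive_of_apply_eq_self_of_span_eq_top {S : Set V}
    (hS : Submodule.span ℂ S = ⊤) (hι : ∀ v ∈ S, ι v = v) : Function.Involutive ι :=
  LinearMap.congr_fun (LinearMap.ext_on (f := ι.comp ι) (g := LinearMap.id) hS fun x hx => by
    simp [hι x hx])

theorem mem_of_apply_eq_self [Module ℝ V] {S : Submodule ℝ V}
    (hS : ∀ v : V, ∃ a ∈ S, ∃ c ∈ S, v = a + I • c) (hι : ∀ v ∈ S, ι v = v) {v : V}
    (hv : ι v = v) : v ∈ S := by
  obtain ⟨a, ha, c, hc, rfl⟩ := hS v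
  have h2c : (2 * I) • c = 0 := by
    simp only [map_add, map_smulₛₗ, hι a ha, hι c hc, conj_I] at hv
    linear_combination (norm := module) -hv
  obtain rfl : c = 0 := (smul_eq_zero.mp h2c).resolve_left (by simp)
  simpa using ha

theorem LinearMap.BilinForm.apply_map_map_eq_conj (B : LinearMap.BilinForm ℂ V) {S : Set V}
    (hS : Submodule.span ℂ S = ⊤) (hreal : ∀ x ∈ S, ∀ y ∈ S, (B x y).im = 0)
    (hι : ∀ v ∈ S, ι v = v) (x y : V) : B (ι x) (ι y) = conj (B x y) := by
  have hx : x ∈ Submodule.span ℂ S := hS ▸ Submodule.mem_top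
  have hy : y ∈ Submodule.span ℂ S := hS ▸ Submodule.mem_top
  induction hx, hy using Submodule.span_induction₂ with
  | mem_mem x y hx hy => rw [hι x hx, hι y hy, conj_eq_iff_im.mpr (hreal x hx y hy)]
  | zero_left => simp
  | zero_right => simp
  | add_left => simp_all
  | add_right => simp_all
  | smul_left => simp_all
  | smul_right => simp_all

theorem eq_zero_of_mem_of_apply_mem (hinv : Function.Involutive ι) {W : Submodule ℂ V}
    (hW : ∀ w ∈ W, ι w = w → w = 0) {v : V} (hv : v ∈ W) (hιv : ι v ∈ W) : v = 0 := by
  have hneg : ι v = -v := eq_neg_of_add_eq_zero_right <|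
    hW _ (add_mem hv hιv) (by rw [map_add, hinv, add_comm])
  have hIv : I • v = 0 := hW _ (W.smul_mem I hv) (by simp [hneg])
  exact (smul_eq_zero.mp hIv).resolve_left I_ne_zero

end RealForm

theorem LinearMap.BilinForm.orthogonal_eq_self_of_isotropic {K V : Type*} [Field K]
    [AddCommGroup V] [Module K V] [FiniteDimensional K V] {B : LinearMap.BilinForm K V}
    (hB : B.Nondegenerate) {L : Submodule K V} (hL : ∀ x ∈ L, ∀ y ∈ L, B x y = 0)
    (hdim : finrank K V = 2 * finrank K L) : B.orthogonal L = L := by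
  refine (Submodule.eq_of_le_of_finrank_le (fun x hx => ?_) ?_).symm
  · exact B.mem_orthogonal_iff.mpr fun y hy => hL y hy x hx
  · rw [finrank_orthogonal hB, hdim]
    omega

noncomputable def sigmaBilin (n : ℕ) : LinearMap.BilinForm ℂ ((Fin n → ℂ) × (Fin n → ℂ)) :=
  LinearMap.mk₂ ℂ (sigmaC n)
    (fun _ _ _ => by simp [sigmaC, mul_add, add_mul, Finset.sum_add_distrib]; ring)
    (fun _ _ _ => by simp [sigmaC, Finset.mul_sum, mul_sub, mul_left_comm, mul_assoc])
    (fun _ _ _ => by simp [sigmaC, mul_add, add_mul, Finset.sum_add_distrib]; ring)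
    (fun _ _ _ => by simp [sigmaC, Finset.mul_sum, mul_sub, mul_left_comm, mul_assoc])

theorem sigmaBilin_apply (n : ℕ) (X Y : (Fin n → ℂ) × (Fin n → ℂ)) :
    sigmaBilin n X Y = sigmaC n X Y := rfl

theorem sigmaBilin_isAlt (n : ℕ) : (sigmaBilin n).IsAlt := by
  intro X
  simp [sigmaBilin_apply, sigmaC]

theorem sigmaBilin_nondegenerate (n : ℕ) : (sigmaBilin n).Nondegenerate := by
  refine ((sigmaBilin_isAlt n).isRefl.nondegenerate_iff_separatingLeft).mpr fun X hX => ?_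
  ext j
  · simpa [sigmaBilin_apply, sigmaC, Pi.single_apply] using hX (0, Pi.single j 1)
  · simpa [sigmaBilin_apply, sigmaC, Pi.single_apply] using hX (Pi.single j 1, 0)

theorem stmt_10_general (n : ℕ) (Sig : Submodule ℝ ((Fin n → ℂ) × (Fin n → ℂ)))
    (hdim : Module.finrank ℝ Sig = 2 * n)
    (htotreal : ∀ v ∈ Sig, Complex.I • v ∈ Sig → v = 0)
    (hreal : ∀ X ∈ Sig, ∀ Y ∈ Sig, (sigmaC n X Y).im = 0)
    (ι : ((Fin n → ℂ) × (Fin n → ℂ)) →ₛₗ[starRingEnd ℂ] ((Fin n → ℂ) × (Fin n → ℂ)))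
    (hι : ∀ v ∈ Sig, ι v = v)
    (Λ : Submodule ℂ ((Fin n → ℂ) × (Fin n → ℂ)))
    (hΛdim : Module.finrank ℂ Λ = n)
    (hΛlag : ∀ X ∈ Λ, ∀ Y ∈ Λ, sigmaC n X Y = 0)
    (b : ((Fin n → ℂ) × (Fin n → ℂ)) → ((Fin n → ℂ) × (Fin n → ℂ)) → ℂ)
    (hb : ∀ ρ μ, b ρ μ = 1 / Complex.I * sigmaC n ρ (ι μ)) :
    (∀ ρ ∈ Λ, (∀ μ ∈ Λ, b ρ μ = 0) → ρ = 0) ↔ (∀ v ∈ Λ, v ∈ Sig → v = 0) := by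
  have hfinrank : finrank ℂ ((Fin n → ℂ) × (Fin n → ℂ)) = 2 * n := by
    simp [Module.finrank_prod, two_mul]
  have hdecomp := exists_eq_add_I_smul (hdim.trans hfinrank.symm) htotreal
  have hspan := span_complex_eq_top_of_forall_eq_add_I_smul hdecomp
  have hinv := involutive_of_apply_eq_self_of_span_eq_top ι hspan hι
  have hconj := (sigmaBilin n).apply_map_map_eq_conj ι hspan hreal hι
  have hΛperp : (sigmaBilin n).orthogonal Λ = Λ :=
    LinearMap.BilinForm.orthogonal_eq_self_of_isotropic (sigmaBilin_nondegenerate n) hΛlag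
      (by rw [hfinrank, hΛdim])
  have hb0 : ∀ ρ μ, b ρ μ = 0 ↔ sigmaC n ρ (ι μ) = 0 := by simp [hb]
  constructor
  · intro hnd v hvΛ hvS
    refine hnd v hvΛ fun μ hμ => ?_
    rw [hb0, ← sigmaBilin_apply, ← hι v hvS, hconj, sigmaBilin_apply, hΛlag v hvΛ μ hμ, map_zero]
  · intro hcap ρ hρ h0
    refine eq_zero_of_mem_of_apply_mem ι hinv
      (fun w hw hfix => hcap w hw (mem_of_apply_eq_self ι hdecomp hι hfix)) hρ ?_
    rw [← hΛperp, LinearMap.BilinForm.mem_orthogonal_iff]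
    intro μ hμ
    refine (sigmaBilin_isAlt n).isRefl _ _ ?_
    rw [← hinv μ, hconj, sigmaBilin_apply, (hb0 ρ μ).mp (h0 μ hμ), map_zero]

/-- let `Σ ⊂ ℂ²ⁿ` be a maximal totally real subspace on which `σ` is real
and nondegenerate, `ι` the conjugate-linear involution fixing `Σ`, `Λ` a complex
Lagrangian plane, and `b(ρ,μ) = (1/i)σ(ρ, ι(μ))` the associated Hermitian form on `Λ`.
Then `b` is nondegenerate iff `Λ ∩ Σ = {0}`. -/
theorem stmt_10 (n : ℕ) (Sig : Submodule ℝ ((Fin n → ℂ) × (Fin n → ℂ)))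
    (hdim : Module.finrank ℝ Sig = 2 * n)
    (htotreal : ∀ v ∈ Sig, Complex.I • v ∈ Sig → v = 0)
    (hreal : ∀ X ∈ Sig, ∀ Y ∈ Sig, (sigmaC n X Y).im = 0)
    (hnondeg : ∀ X ∈ Sig, (∀ Y ∈ Sig, sigmaC n X Y = 0) → X = 0)
    (ι : ((Fin n → ℂ) × (Fin n → ℂ)) →ₛₗ[starRingEnd ℂ] ((Fin n → ℂ) × (Fin n → ℂ)))
    (hι : ∀ v ∈ Sig, ι v = v)
    (Λ : Submodule ℂ ((Fin n → ℂ) × (Fin n → ℂ)))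
    (hΛdim : Module.finrank ℂ Λ = n)
    (hΛlag : ∀ X ∈ Λ, ∀ Y ∈ Λ, sigmaC n X Y = 0)
    (b : ((Fin n → ℂ) × (Fin n → ℂ)) → ((Fin n → ℂ) × (Fin n → ℂ)) → ℂ)
    (hb : ∀ ρ μ, b ρ μ = 1 / Complex.I * sigmaC n ρ (ι μ)) :
    (∀ ρ ∈ Λ, (∀ μ ∈ Λ, b ρ μ = 0) → ρ = 0) ↔ (∀ v ∈ Λ, v ∈ Sig → v = 0) :=
  stmt_10_general n Sig hdim htotreal hreal ι hι Λ hΛdim hΛlag b hb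
end

section
/- Let Λ ⊆ ℂ^{2n} be a complex Lagrangian plane. Then (1/i)·σ(X, conj(X)) > 0 for every nonzero X ∈ Λ if and only if there exists a symmetric complex n×n matrix M whose entrywise imaginary part Im M is positive definite such that Λ = {(x, Mx) : x ∈ ℂⁿ}. -/
/-!
For `X = (x, ξ)` one has `(1/i) σ(X, X̄) = 2 Im (x̄ · ξ)`, which vanishes when `x = 0`. So positivity
makes the projection `Λ → ℂⁿ, (x, ξ) ↦ x` injective, hence bijective as `dim Λ = n`, and `Λ` is the
graph of some `x ↦ M x`. On a graph the Lagrangian condition is the symmetry of `M`, and for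
symmetric `M` and `x = u + i v` with `u, v` real, `Im (x̄ · M x) = u · (Im M) u + v · (Im M) v`; this is
positive for all `x ≠ 0` exactly when `Im M` is positive definite.
-/

open Matrix

open Complex ComplexConjugate ComplexOrder Module

theorem Submodule.exists_eq_graph_of_finrank_eq {K V W : Type*} [Field K] [AddCommGroup V]
    [Module K V] [AddCommGroup W] [Module K W] [FiniteDimensional K V]
    (Λ : Submodule K (V × W)) (hdim : finrank K Λ = finrank K V)
    (hΛ : ∀ p ∈ Λ, p.1 = 0 → p = 0) : ∃ g : V →ₗ[K] W, Λ = g.graph := by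
  let f : Λ →ₗ[K] V := (LinearMap.fst K V W).comp Λ.subtype
  have hinj : Function.Injective f := by
    rw [← LinearMap.ker_eq_bot, LinearMap.ker_eq_bot']
    exact fun p hp => Subtype.ext (hΛ p p.2 hp)
  have : FiniteDimensional K Λ := Module.Finite.of_injective f hinj
  let e := LinearEquiv.ofBijective f
    ⟨hinj, (LinearMap.injective_iff_surjective_of_finrank_eq_finrank hdim).mp hinj⟩
  refine ⟨(LinearMap.snd K V W).comp (Λ.subtype.comp e.symm.toLinearMap), ?_⟩
  ext p
  rw [LinearMap.mem_graph_iff]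
  constructor
  · intro hp
    have : e.symm p.1 = ⟨p, hp⟩ := e.symm_apply_eq.mpr rfl
    simp [this]
  · intro hp
    have : p = (e.symm p.1 : V × W) := Prod.ext (e.apply_symm_apply p.1).symm hp
    rw [this]
    exact (e.symm p.1).2

namespace Matrix

variable {n : Type*} [Fintype n]

theorem isSymm_of_mulVec_dotProduct_comm {R : Type*} [CommSemiring R] [DecidableEq n]
    {M : Matrix n n R} (h : ∀ x y : n → R, (M *ᵥ x) ⬝ᵥ y = (M *ᵥ y) ⬝ᵥ x) : M.IsSymm :=
  IsSymm.ext fun i j => by simpa [mulVec_single_one] using h (Pi.single i 1) (Pi.single j 1)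

theorem IsSymm.dotProduct_mulVec_comm {R : Type*} [CommSemiring R] {M : Matrix n n R}
    (hM : M.IsSymm) (x y : n → R) : x ⬝ᵥ (M *ᵥ y) = y ⬝ᵥ (M *ᵥ x) := by
  rw [dotProduct_mulVec, ← mulVec_transpose, hM.eq, dotProduct_comm]

theorem IsSymm.sub_smul_dotProduct_mulVec_add_smul {R : Type*} [CommRing R] {M : Matrix n n R}
    (hM : M.IsSymm) (a b : n → R) (c : R) :
    (a - c • b) ⬝ᵥ (M *ᵥ (a + c • b)) = a ⬝ᵥ (M *ᵥ a) - c ^ 2 * (b ⬝ᵥ (M *ᵥ b)) := by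
  simp only [mulVec_add, mulVec_smul, dotProduct_add, sub_dotProduct, smul_dotProduct,
    dotProduct_smul, hM.dotProduct_mulVec_comm b a, smul_eq_mul]
  ring

theorem im_dotProduct_mulVec_ofReal (M : Matrix n n ℂ) (u : n → ℝ) :
    ((fun j => (u j : ℂ)) ⬝ᵥ (M *ᵥ fun j => (u j : ℂ))).im = u ⬝ᵥ (M.map im *ᵥ u) := by
  simp [mulVec, dotProduct, im_sum, Finset.mul_sum]

theorem IsSymm.im_star_dotProduct_mulVec {M : Matrix n n ℂ} (hM : M.IsSymm) (x : n → ℂ) :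
    (star x ⬝ᵥ (M *ᵥ x)).im = (fun j => (x j).re) ⬝ᵥ (M.map im *ᵥ fun j => (x j).re)
      + (fun j => (x j).im) ⬝ᵥ (M.map im *ᵥ fun j => (x j).im) := by
  set u : n → ℝ := fun j => (x j).re
  set v : n → ℝ := fun j => (x j).im
  have hx : x = (fun j => (u j : ℂ)) + I • fun j => (v j : ℂ) := by
    funext j; apply Complex.ext <;> simp [u, v]
  have hsx : star x = (fun j => (u j : ℂ)) - I • fun j => (v j : ℂ) := by
    funext j; apply Complex.ext <;> simp [u, v]
  conv_lhs => rw [hsx, hx]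
  rw [hM.sub_smul_dotProduct_mulVec_add_smul, I_sq, neg_one_mul, sub_neg_eq_add, add_im,
    im_dotProduct_mulVec_ofReal, im_dotProduct_mulVec_ofReal]

theorem IsSymm.posDef_map_im_iff {M : Matrix n n ℂ} (hM : M.IsSymm) :
    (M.map im).PosDef ↔ ∀ x : n → ℂ, x ≠ 0 → 0 < (star x ⬝ᵥ (M *ᵥ x)).im := by
  have hB : (M.map im).IsHermitian :=
    (conjTranspose_eq_transpose_of_trivial _).trans (hM.map im).eq
  rw [posDef_iff_dotProduct_mulVec]
  simp only [star_trivial]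
  constructor
  · rintro ⟨-, hpos⟩ x hx
    have hnonneg : ∀ w, 0 ≤ w ⬝ᵥ (M.map im *ᵥ w) := fun w => by
      rcases eq_or_ne w 0 with rfl | hw
      · simp
      · exact (hpos hw).le
    have hreim : (fun j => (x j).re) ≠ 0 ∨ (fun j => (x j).im) ≠ 0 := by
      contrapose! hx
      funext j
      exact Complex.ext (congrFun hx.1 j) (congrFun hx.2 j)
    rw [hM.im_star_dotProduct_mulVec]
    rcases hreim with h | h
    · exact add_pos_of_pos_of_nonneg (hpos h) (hnonneg _)
    · exact add_pos_of_nonneg_of_pos (hnonneg _) (hpos h)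
  · refine fun h => ⟨hB, fun u hu => ?_⟩
    have hu' : (fun j => (u j : ℂ)) ≠ 0 := fun h0 => hu (funext fun j => by
      simpa using congrFun h0 j)
    have hstar : star (fun j => (u j : ℂ)) = fun j => (u j : ℂ) :=
      funext fun j => conj_ofReal (u j)
    simpa [hstar, ← im_dotProduct_mulVec_ofReal] using h _ hu'

end Matrix

theorem sigmaC_eq_dotProduct_sub_dotProduct {n : ℕ} (X Y : (Fin n → ℂ) × (Fin n → ℂ)) :
    sigmaC n X Y = X.2 ⬝ᵥ Y.1 - Y.2 ⬝ᵥ X.1 :=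
  rfl

theorem one_div_I_mul_sigmaC_conj {n : ℕ} (X : (Fin n → ℂ) × (Fin n → ℂ)) :
    1 / I * sigmaC n X ((fun j => conj (X.1 j)), fun j => conj (X.2 j))
      = ((2 * (star X.1 ⬝ᵥ X.2).im : ℝ) : ℂ) := by
  have hσ : sigmaC n X ((fun j => conj (X.1 j)), fun j => conj (X.2 j))
      = star X.1 ⬝ᵥ X.2 - conj (star X.1 ⬝ᵥ X.2) := by
    rw [sigmaC_eq_dotProduct_sub_dotProduct, dotProduct_comm]
    exact congrArg _ (star_dotProduct X.2 X.1)
  rw [hσ, sub_conj]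
  field_simp

theorem zero_lt_one_div_I_mul_sigmaC_conj_iff {n : ℕ} (X : (Fin n → ℂ) × (Fin n → ℂ)) :
    0 < 1 / I * sigmaC n X ((fun j => conj (X.1 j)), fun j => conj (X.2 j))
      ↔ 0 < (star X.1 ⬝ᵥ X.2).im := by
  rw [one_div_I_mul_sigmaC_conj, zero_lt_real, mul_pos_iff_of_pos_left two_pos]

open ComplexOrder in
/-- a complex Lagrangian plane `Λ` satisfies `(1/i)σ(X, conj X) > 0`
for all nonzero `X ∈ Λ` iff `Λ = {(x, Mx)}` for a symmetric complex matrix `M` whose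
imaginary part is positive definite. -/
theorem stmt_12 (n : ℕ) (Λ : Submodule ℂ ((Fin n → ℂ) × (Fin n → ℂ)))
    (hΛdim : Module.finrank ℂ Λ = n)
    (hΛlag : ∀ X ∈ Λ, ∀ Y ∈ Λ, sigmaC n X Y = 0) :
    (∀ X ∈ Λ, X ≠ 0 →
        0 < 1 / Complex.I * sigmaC n X
          ((fun j => starRingEnd ℂ (X.1 j)), fun j => starRingEnd ℂ (X.2 j))) ↔
      ∃ M : Matrix (Fin n) (Fin n) ℂ, Mᵀ = M ∧
        (Matrix.of fun j k => (M j k).im).PosDef ∧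
        (Λ : Set ((Fin n → ℂ) × (Fin n → ℂ))) = {p | p.2 = M *ᵥ p.1} := by
  simp only [zero_lt_one_div_I_mul_sigmaC_conj_iff]
  constructor
  · intro hpos
    obtain ⟨g, rfl⟩ := Λ.exists_eq_graph_of_finrank_eq (by rw [hΛdim, finrank_fin_fun])
      fun p hp hp1 => by_contra fun hp0 => by simpa [hp1] using hpos p hp hp0
    set M := LinearMap.toMatrix' g
    have hgraph : ∀ x, (x, M *ᵥ x) ∈ g.graph := fun x => by
      simp [LinearMap.mem_graph_iff, M, LinearMap.toMatrix'_mulVec]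
    have hM : M.IsSymm := isSymm_of_mulVec_dotProduct_comm fun x y =>
      sub_eq_zero.mp (hΛlag _ (hgraph x) _ (hgraph y))
    refine ⟨M, hM, hM.posDef_map_im_iff.mpr fun x hx =>
      hpos _ (hgraph x) fun h0 => hx (congrArg Prod.fst h0), ?_⟩
    ext p
    simp [LinearMap.mem_graph_iff, M, LinearMap.toMatrix'_mulVec]
  · rintro ⟨M, hM, hpd, hΛ⟩ X hX hX0
    have hX2 : X.2 = M *ᵥ X.1 := by rwa [← SetLike.mem_coe, hΛ] at hX
    rw [hX2]
    exact (IsSymm.posDef_map_im_iff hM).mp hpd X.1 fun hX1 =>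
      hX0 (Prod.ext hX1 (by rw [hX2, hX1, mulVec_zero]; rfl))
end

section
/- Let S be a symmetric complex n×n matrix and H a Hermitian n×n matrix, and set Λ_Φ = {(x, (2/i)(Sx + conj(Hx))) : x ∈ ℂⁿ} ⊂ ℂ^{2n}, a real-linear subspace of real dimension 2n. Then: (i) σ takes real values on Λ_Φ × Λ_Φ (i.e. Λ_Φ is I-Lagrangian: Im σ vanishes on Λ_Φ); (ii) Λ_Φ ∩ iΛ_Φ = {0} if and only if H is invertible; and (iii) the restriction of σ to Λ_Φ is nondegenerate if and only if H is invertible. -/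
/-!
Parametrize `Λ_Φ` by `x ↦ (x, ξ x)`. Then `σ((x, ξ x), (y, ξ y)) = 4 Im (conj (Hx) · y)`: the
`S`-terms cancel because `S` is symmetric, and the `H`-terms form `z - conj z` because `H` is
Hermitian. So `σ` is real on `Λ_Φ`, and its radical there is the graph over `ker H`. Likewise
`ξ (i x) - i ξ x = -4 conj (Hx)`, so `Λ_Φ ∩ iΛ_Φ` is also the graph over `ker H`.
-/

open Matrix

open Complex ComplexConjugate

section

variable {m : Type*} [Fintype m]

theorem Matrix.mulVec_dotProduct_comm_of_transpose_eq {R : Type*} [CommSemiring R]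
    {S : Matrix m m R} (hS : Sᵀ = S) (x y : m → R) : S *ᵥ x ⬝ᵥ y = S *ᵥ y ⬝ᵥ x := by
  rw [dotProduct_comm, dotProduct_mulVec, ← mulVec_transpose, hS]

theorem Matrix.IsHermitian.star_mulVec_dotProduct_swap {R : Type*} [CommRing R] [StarRing R]
    {H : Matrix m m R} (hH : H.IsHermitian) (x y : m → R) :
    star (H *ᵥ y) ⬝ᵥ x = star (star (H *ᵥ x) ⬝ᵥ y) := by
  rw [← star_dotProduct_star, star_star, star_mulVec, hH.eq, dotProduct_mulVec]

theorem Matrix.isUnit_iff_forall_mulVec_eq_zero [DecidableEq m] {K : Type*} [Field K]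
    {A : Matrix m m K} : IsUnit A ↔ ∀ v, A *ᵥ v = 0 → v = 0 := by
  rw [← mulVec_injective_iff_isUnit]
  exact injective_iff_map_eq_zero A.mulVecLin

theorem forall_im_dotProduct_eq_zero_iff (v : m → ℂ) : (∀ y, (v ⬝ᵥ y).im = 0) ↔ v = 0 := by
  refine ⟨fun him => ?_, fun hv y => by simp [hv]⟩
  -- testing against `I • y` turns imaginary parts into real parts
  have hre : ∀ y, (v ⬝ᵥ y).re = 0 := fun y => by simpa [dotProduct_smul] using him (I • y)
  have hself : v ⬝ᵥ star v = 0 := Complex.ext (hre _) (him _)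
  open scoped ComplexOrder in
  rwa [dotProduct_comm, dotProduct_star_self_eq_zero] at hself

/-- `(2/i) ∂Φ/∂x`, so that `Λ_Φ` is the graph of `dPhi S H`. -/
noncomputable def dPhi (S H : Matrix m m ℂ) (x : m → ℂ) : m → ℂ :=
  (2 / I) • (S *ᵥ x + star (H *ᵥ x))

variable {S H : Matrix m m ℂ}

@[simp]
theorem dPhi_zero : dPhi S H 0 = 0 := by
  simp [dPhi]

theorem dPhi_I_smul_eq_iff (x : m → ℂ) : dPhi S H (I • x) = I • dPhi S H x ↔ H *ᵥ x = 0 := by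
  have hdiff : dPhi S H (I • x) - I • dPhi S H x = (-4 : ℂ) • star (H *ᵥ x) := by
    simp only [dPhi, div_I, mulVec_smul, star_smul, RCLike.star_def, conj_I, smul_add, smul_smul]
    linear_combination (norm := module) I_sq • (4 : ℂ) • star (H *ᵥ x)
  rw [← sub_eq_zero, hdiff, smul_eq_zero, star_eq_zero]
  norm_num

end

theorem sigmaC_dPhi {n : ℕ} {S H : Matrix (Fin n) (Fin n) ℂ} (hS : Sᵀ = S) (hH : H.IsHermitian)
    (x y : Fin n → ℂ) :
    sigmaC n (x, dPhi S H x) (y, dPhi S H y) = 4 * (star (H *ᵥ x) ⬝ᵥ y).im := by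
  change dPhi S H x ⬝ᵥ y - dPhi S H y ⬝ᵥ x = _
  simp only [dPhi, smul_dotProduct, add_dotProduct, smul_eq_mul]
  rw [mulVec_dotProduct_comm_of_transpose_eq hS x y, hH.star_mulVec_dotProduct_swap x y,
    ← mul_sub, add_sub_add_left_eq_sub]
  change 2 / I * (_ - conj _) = _
  rw [sub_conj, div_I]
  push_cast
  linear_combination (-4 * ((star (H *ᵥ x) ⬝ᵥ y).im : ℂ)) * I_sq

/-- for `Λ_Φ = {(x, (2/i)(Sx + conj(Hx)))}` with `S` symmetric and `H`
Hermitian: (i) `σ` is real-valued on `Λ_Φ × Λ_Φ`; (ii) `Λ_Φ ∩ iΛ_Φ = {0}` iff `H` is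
invertible; (iii) the restriction of `σ` to `Λ_Φ` is nondegenerate iff `H` is
invertible. -/
theorem stmt_13 (n : ℕ) (S H : Matrix (Fin n) (Fin n) ℂ)
    (hS : Sᵀ = S) (hH : H.IsHermitian)
    (L : Set ((Fin n → ℂ) × (Fin n → ℂ)))
    (hL : L = {p | p.2 =
      (2 / Complex.I) • (S *ᵥ p.1 + fun j => starRingEnd ℂ ((H *ᵥ p.1) j))}) :
    (∀ P ∈ L, ∀ Q ∈ L, (sigmaC n P Q).im = 0) ∧
    ((∀ p ∈ L, Complex.I • p ∈ L → p = 0) ↔ IsUnit H) ∧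
    ((∀ p ∈ L, (∀ q ∈ L, sigmaC n p q = 0) → p = 0) ↔ IsUnit H) := by
  have hgraph : L = Set.range fun x => (x, dPhi S H x) := by
    subst hL
    ext ⟨x, ξ⟩
    simp only [Set.mem_ofPred_eq, Set.mem_range, Prod.mk.injEq, exists_eq_left]
    exact eq_comm
  have graph_eq_zero : ∀ x, (x, dPhi S H x) = 0 ↔ x = 0 := fun x => by
    simp +contextual [Prod.mk_eq_zero]
  rw [hgraph]
  simp only [Set.forall_mem_range, sigmaC_dPhi hS hH, isUnit_iff_forall_mulVec_eq_zero]
  refine ⟨fun x y => by simp, ?_, ?_⟩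
  · simp only [Set.mem_range, Prod.smul_mk, Prod.mk.injEq, exists_eq_left, dPhi_I_smul_eq_iff,
      graph_eq_zero]
  · simp [graph_eq_zero, forall_im_dotProduct_eq_zero_iff]
end

section
/- Let S be a symmetric complex n×n matrix and H a positive definite Hermitian n×n matrix, let Λ_Φ = {(x, (2/i)(Sx + conj(Hx))) : x ∈ ℂⁿ} ⊂ ℂ^{2n}, and let ι : ℂ^{2n} → ℂ^{2n} be the unique conjugate-linear map restricting to the identity on Λ_Φ. Then the fiber F = {(0,η) : η ∈ ℂⁿ} is Λ_Φ-negative: for every nonzero η ∈ ℂⁿ, (1/i)σ((0,η), ι(0,η)) equals −(1/2) times the positive real number w* H⁻¹ w with w = conj(η), so (1/i)σ((0,η), ι(0,η)) < 0, and indeed (1/i)σ((0,η), ι(0,η)) ≤ −|η|²/C for some constant C > 0 independent of η. -/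
open Matrix

open ComplexOrder in
/-- with `S` symmetric, `H` positive definite Hermitian,
`Λ_Φ = {(x, (2/i)(Sx + conj(Hx)))}` and `ι` the conjugate-linear map fixing `Λ_Φ`,
the fiber `F = {(0,η)}` is `Λ_Φ`-negative:
`(1/i)σ((0,η), ι(0,η)) = −(1/2)·(w* H⁻¹ w)` with `w = conj η`, which is `< 0` for
`η ≠ 0`, and indeed `≤ −|η|²/C` for some constant `C > 0`. -/
theorem stmt_14 (n : ℕ) (S H : Matrix (Fin n) (Fin n) ℂ)
    (hS : Sᵀ = S) (hH : H.PosDef)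
    (L : Set ((Fin n → ℂ) × (Fin n → ℂ)))
    (hL : L = {p | p.2 =
      (2 / Complex.I) • (S *ᵥ p.1 + fun j => starRingEnd ℂ ((H *ᵥ p.1) j))})
    (ι : ((Fin n → ℂ) × (Fin n → ℂ)) →ₛₗ[starRingEnd ℂ] ((Fin n → ℂ) × (Fin n → ℂ)))
    (hι : ∀ p ∈ L, ι p = p) :
    (∀ η : Fin n → ℂ,
        1 / Complex.I * sigmaC n (0, η) (ι (0, η)) =
          -(1 / 2) * (η ⬝ᵥ (H⁻¹ *ᵥ fun j => starRingEnd ℂ (η j)))) ∧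
    (∀ η : Fin n → ℂ, η ≠ 0 →
        1 / Complex.I * sigmaC n (0, η) (ι (0, η)) < 0) ∧
    (∃ C : ℝ, 0 < C ∧ ∀ η : Fin n → ℂ,
        1 / Complex.I * sigmaC n (0, η) (ι (0, η)) ≤
          (-((∑ j, Complex.normSq (η j)) / C : ℝ) : ℂ)) := by
  have hdet : IsUnit H.det := isUnit_iff_ne_zero.mpr (by
    have := hH.det_pos; exact_mod_cast this.ne')
  have hMpd : (H⁻¹).PosDef := hH.inv
  -- the key computation: the first component of ι (0, η)
  have key : ∀ η : Fin n → ℂ,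
      (ι (0, η)).1 = (-(Complex.I)/2) • (H⁻¹ *ᵥ fun j => starRingEnd ℂ (η j)) := by
    intro η
    set w : Fin n → ℂ := fun j => starRingEnd ℂ (η j) with hw
    set x : Fin n → ℂ := (-(Complex.I)/4) • (H⁻¹ *ᵥ w) with hx
    have hHx : H *ᵥ x = (-(Complex.I)/4) • w := by
      rw [hx, Matrix.mulVec_smul, Matrix.mulVec_mulVec, Matrix.mul_nonsing_inv _ hdet,
        Matrix.one_mulVec]
    set f : (Fin n → ℂ) → (Fin n → ℂ) :=
      fun v => (2 / Complex.I) • (S *ᵥ v + fun j => starRingEnd ℂ ((H *ᵥ v) j)) with hf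
    have hp : ι (x, f x) = (x, f x) := hι _ (by rw [hL]; exact rfl)
    have hq : ι (Complex.I • x, f (Complex.I • x)) = (Complex.I • x, f (Complex.I • x)) :=
      hι _ (by rw [hL]; exact rfl)
    have hsum : ((0 : Fin n → ℂ), η)
        = (x, f x) + Complex.I • (Complex.I • x, f (Complex.I • x)) := by
      refine Prod.ext ?_ ?_
      · funext j
        simp only [Prod.fst_add, Prod.smul_fst, Pi.add_apply, Pi.smul_apply, smul_eq_mul,
          Pi.zero_apply]
        linear_combination (-(x j)) * Complex.I_sq
      · funext j
        have h1 : (H *ᵥ x) j = (-(Complex.I)/4) * w j := by rw [hHx]; simp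
        have h3 : starRingEnd ℂ (w j) = η j := by simp [hw]
        have h4 : starRingEnd ℂ ((H *ᵥ x) j) = (Complex.I/4) * η j := by
          rw [h1, _root_.map_mul, h3, map_div₀, map_neg, Complex.conj_I, map_ofNat]
          ring
        have h5 : starRingEnd ℂ ((H *ᵥ (Complex.I • x)) j)
            = (-Complex.I) * ((Complex.I/4) * η j) := by
          rw [Matrix.mulVec_smul]
          simp only [Pi.smul_apply, smul_eq_mul, _root_.map_mul, Complex.conj_I, h4]
        have h6 : (S *ᵥ (Complex.I • x)) j = Complex.I * (S *ᵥ x) j := by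
          rw [Matrix.mulVec_smul]; simp
        simp only [Prod.snd_add, Prod.smul_snd, Pi.add_apply, Pi.smul_apply, smul_eq_mul, hf,
          h4, h5, h6, Pi.zero_apply]
        have hI := Complex.I_ne_zero
        field_simp
        linear_combination (2*η j*Complex.I - 8*(S *ᵥ x) j) * Complex.I_sq
    have hfst : ι ((0 : Fin n → ℂ), η)
        = (x, f x) + starRingEnd ℂ Complex.I • (Complex.I • x, f (Complex.I • x)) := by
      rw [hsum, map_add, LinearMap.map_smulₛₗ, hp, hq]
    have := congrArg Prod.fst hfst
    rw [this]
    funext j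
    simp only [Prod.fst_add, Prod.smul_fst, Pi.add_apply, Pi.smul_apply, smul_eq_mul,
      Complex.conj_I, hx]
    linear_combination (Complex.I/4 * (H⁻¹ *ᵥ w) j) * Complex.I_sq
  -- main formula
  have main : ∀ η : Fin n → ℂ,
      1 / Complex.I * sigmaC n (0, η) (ι (0, η)) =
        -(1 / 2) * (η ⬝ᵥ (H⁻¹ *ᵥ fun j => starRingEnd ℂ (η j))) := by
    intro η
    rw [sigmaC, key η]
    simp only [Pi.zero_apply, mul_zero, Finset.sum_const_zero, sub_zero, Pi.smul_apply,
      smul_eq_mul, dotProduct, Finset.mul_sum]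
    refine Finset.sum_congr rfl fun j _ => ?_
    rw [one_div, Complex.inv_I]
    linear_combination (η j * ((H⁻¹ *ᵥ fun k => starRingEnd ℂ (η k)) j))/2 * Complex.I_sq
  -- rewrite the Hermitian form
  have hreal : ∀ η : Fin n → ℂ,
      (η ⬝ᵥ (H⁻¹ *ᵥ fun j => starRingEnd ℂ (η j)))
        = star (fun j => starRingEnd ℂ (η j)) ⬝ᵥ (H⁻¹ *ᵥ fun j => starRingEnd ℂ (η j)) := by
    intro η
    congr 1
    funext j
    simp
  refine ⟨main, fun η hη => ?_, ?_⟩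
  · rw [main η, hreal η]
    have hw0 : (fun j => starRingEnd ℂ (η j)) ≠ 0 := by
      intro h
      apply hη
      funext j
      have := congrFun h j
      simpa using congrArg (starRingEnd ℂ) this
    have hpos := hMpd.dotProduct_mulVec_pos hw0
    have hhalf : (0 : ℂ) < 1/2 := by
      rw [Complex.lt_def]; norm_num
    rw [neg_mul]
    exact neg_lt_zero.mpr (mul_pos hhalf hpos)
  · -- uniform bound
    set φ : (Fin n → ℂ) → ℝ := fun v => Complex.re (star v ⬝ᵥ (H⁻¹ *ᵥ v)) with hφ
    have hφim : ∀ v : Fin n → ℂ, (star v ⬝ᵥ (H⁻¹ *ᵥ v)) = (φ v : ℂ) := by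
      intro v
      have h := hMpd.posSemidef.dotProduct_mulVec_nonneg v
      rw [Complex.le_def] at h
      exact Complex.ext (by simp [hφ]) (by simpa using h.2.symm)
    have hnormsq : ∀ v : EuclideanSpace ℂ (Fin n), ‖v‖^2 = ∑ j, Complex.normSq (v j) := by
      intro v
      rw [EuclideanSpace.norm_eq, Real.sq_sqrt (by positivity)]
      congr 1; funext j; rw [Complex.sq_norm]
    have hbound : ∃ m : ℝ, 0 < m ∧ ∀ v : Fin n → ℂ, m * (∑ j, Complex.normSq (v j)) ≤ φ v := by
      rcases Nat.eq_zero_or_pos n with hn | hn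
      · subst hn
        exact ⟨1, one_pos, fun v => by simp [hφ, dotProduct]⟩
      haveI : Nonempty (Fin n) := ⟨⟨0, hn⟩⟩
      have hK : IsCompact (Metric.sphere (0 : EuclideanSpace ℂ (Fin n)) 1) := isCompact_sphere _ _
      have hne : (Metric.sphere (0 : EuclideanSpace ℂ (Fin n)) 1).Nonempty :=
        NormedSpace.sphere_nonempty.mpr zero_le_one
      have hcont : Continuous (fun v : EuclideanSpace ℂ (Fin n) => φ v) := by
        refine Complex.continuous_re.comp ?_
        simp only [dotProduct, Matrix.mulVec, Pi.star_apply]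
        refine continuous_finset_sum _ fun j _ => Continuous.mul ?_
          (continuous_finset_sum _ fun k _ => ?_)
        · exact continuous_star.comp ((continuous_apply j).comp (PiLp.continuous_ofLp 2 _))
        · exact continuous_const.mul ((continuous_apply k).comp (PiLp.continuous_ofLp 2 _))
      obtain ⟨v0, hv0K, hmin⟩ := hK.exists_isMinOn hne hcont.continuousOn
      have hv0ne : (v0 : Fin n → ℂ) ≠ 0 := by
        intro h
        have h1 : ‖v0‖ = 1 := by simpa using hv0K
        rw [show v0 = 0 from (WithLp.ofLp_eq_zero 2).mp h] at h1
        simp at h1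
      have hm : 0 < φ v0 := by
        have h := hMpd.dotProduct_mulVec_pos hv0ne
        rw [Complex.lt_def] at h
        simpa [hφ] using h.1
      refine ⟨φ v0, hm, fun v => ?_⟩
      by_cases hv : v = 0
      · simp [hv, hφ, dotProduct]
      · set vE : EuclideanSpace ℂ (Fin n) := WithLp.toLp 2 v with hvE
        have hvne : vE ≠ 0 := fun h => hv ((WithLp.toLp_eq_zero 2).mp h)
        have hnv : 0 < ‖vE‖ := norm_pos_iff.mpr hvne
        set u : EuclideanSpace ℂ (Fin n) := ‖vE‖⁻¹ • vE with hu
        have huK : u ∈ Metric.sphere (0 : EuclideanSpace ℂ (Fin n)) 1 := by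
          simp [hu, norm_smul, abs_of_pos (inv_pos.mpr hnv), inv_mul_cancel₀ hnv.ne']
        have hscale : φ u = (‖vE‖⁻¹)^2 * φ v := by
          have hdp : star ((‖vE‖⁻¹ : ℝ) • (v : Fin n → ℂ)) ⬝ᵥ (H⁻¹ *ᵥ ((‖vE‖⁻¹ : ℝ) • v))
              = ((‖vE‖⁻¹ : ℝ)^2 : ℝ) • (star v ⬝ᵥ (H⁻¹ *ᵥ v)) := by
            rw [Matrix.mulVec_smul, star_smul, smul_dotProduct, dotProduct_smul]
            rw [star_trivial, smul_smul]
            congr 1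
            norm_num [pow_two]
          show (star ((‖vE‖⁻¹ : ℝ) • (v : Fin n → ℂ)) ⬝ᵥ (H⁻¹ *ᵥ ((‖vE‖⁻¹ : ℝ) • v))).re
            = (‖vE‖⁻¹)^2 * (star v ⬝ᵥ (H⁻¹ *ᵥ v)).re
          rw [hdp, Complex.real_smul, Complex.re_ofReal_mul]
        have hmin_u : φ v0 ≤ φ u := hmin huK
        rw [hscale] at hmin_u
        have hfin : φ v0 * ‖vE‖^2 ≤ φ v := by
          have h2 : φ v0 * ‖vE‖^2 ≤ ((‖vE‖⁻¹)^2 * φ v) * ‖vE‖^2 :=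
            mul_le_mul_of_nonneg_right hmin_u (by positivity)
          calc φ v0 * ‖vE‖^2 ≤ ((‖vE‖⁻¹)^2 * φ v) * ‖vE‖^2 := h2
            _ = φ v := by field_simp
        calc φ v0 * (∑ j, Complex.normSq (v j)) = φ v0 * ‖vE‖^2 := by rw [hnormsq vE]
          _ ≤ φ v := hfin
    obtain ⟨m, hm, hmb⟩ := hbound
    refine ⟨2/m, by positivity, fun η => ?_⟩
    rw [main η, hreal η]
    set w : Fin n → ℂ := fun j => starRingEnd ℂ (η j) with hw
    rw [hφim w]
    have hsq : (∑ j, Complex.normSq (η j)) = ∑ j, Complex.normSq (w j) := by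
      refine Finset.sum_congr rfl fun j _ => ?_
      simp [hw, Complex.normSq_conj]
    rw [hsq]
    have hb := hmb w
    have hreal_ineq : -(1/2 : ℝ) * φ w ≤ -((∑ j, Complex.normSq (w j)) / (2/m)) := by
      rw [neg_mul, neg_le_neg_iff, div_div_eq_mul_div, div_le_iff₀ (by norm_num : (0:ℝ) < 2)]
      calc (∑ j, Complex.normSq (w j)) * m = m * (∑ j, Complex.normSq (w j)) := by ring
        _ ≤ φ w := hb
        _ = 1/2 * φ w * 2 := by ring
    calc -(1/2 : ℂ) * (φ w : ℂ) = ((-(1/2 : ℝ) * φ w : ℝ) : ℂ) := by push_cast; ring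
      _ ≤ ((-((∑ j, Complex.normSq (w j)) / (2/m)) : ℝ) : ℂ) := Complex.real_le_real.mpr hreal_ineq
      _ = -((((∑ j, Complex.normSq (w j)) / (2/m) : ℝ)) : ℂ) := by push_cast; ring
end

section
/- Let ω₁, ω₂ be positive real numbers with ω₁ ≠ ω₂ and let g be real, and let F be the complex 4×4 matrix F = [[0,0,1,0],[0,0,0,1],[−ω₁²,−ig,0,0],[−ig,−ω₂²,0,0]]. Then F is diagonalizable over ℂ if and only if 4g² ≠ (ω₁² − ω₂²)²; moreover, when 4g² ≠ (ω₁² − ω₂²)², F has four pairwise distinct eigenvalues λ, characterized by λ² = −(ω₁² + ω₂²)/2 ± ((ω₁² − ω₂²)²/4 − g²)^{1/2}. -/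
/-!
The characteristic polynomial of `F` is `λ⁴ + (ω₁² + ω₂²) λ² + ω₁² ω₂² + g²`, a quadratic in `λ²`
with discriminant `(ω₁² - ω₂²)² - 4 g²` and nonzero constant term. If the discriminant is nonzero,
its two roots in `λ²` are distinct and nonzero, so `F` has four distinct eigenvalues and is
diagonalizable. If it vanishes, `λ² = -(ω₁² + ω₂²)/2` is a double root and an explicit vector `v`
with `(F - λ)² v = 0 ≠ (F - λ) v` shows that `F` has a Jordan block.
-/

open Matrix

namespace Matrix

variable {K n : Type*} [Field K] [Fintype n] [DecidableEq n]

def IsDiagonalizable (A : Matrix n n K) : Prop :=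
  ∃ (P : Matrix n n K) (D : n → K), IsUnit P ∧ A = P * diagonal D * P⁻¹

theorem isDiagonalizable_of_injective_of_det_sub_eq_zero (A : Matrix n n K) (D : n → K)
    (hD : Function.Injective D) (hroot : ∀ i, (A - D i • 1).det = 0) :
    A.IsDiagonalizable := by
  choose v hv0 hv using fun i => exists_mulVec_eq_zero_iff.mpr (hroot i)
  have heigen : ∀ i, A *ᵥ v i = D i • v i := fun i => by
    simpa [sub_mulVec, sub_eq_zero, smul_mulVec] using hv i
  have hindep : LinearIndependent K v :=
    Module.End.eigenvectors_linearIndependent' (toLin' A) D hD v fun i =>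
      ⟨Module.End.mem_eigenspace_iff.mpr (by simpa using heigen i), hv0 i⟩
  set P : Matrix n n K := (of v)ᵀ
  have hP : IsUnit P := linearIndependent_cols_iff_isUnit.mp hindep
  refine ⟨P, D, hP, ?_⟩
  have hAP : A * P = P * diagonal D := by
    ext j i
    rw [mul_diagonal]
    simpa [P, mulVec, dotProduct, mul_apply, mul_comm] using congrFun (heigen i) j
  rw [← hAP, mul_nonsing_inv_cancel_right _ _ ((isUnit_iff_isUnit_det P).mp hP)]

theorem IsDiagonalizable.sub_smul_one {A : Matrix n n K} (hA : A.IsDiagonalizable) (c : K) :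
    (A - c • 1).IsDiagonalizable := by
  obtain ⟨P, D, hP, rfl⟩ := hA
  refine ⟨P, fun i => D i - c, hP, ?_⟩
  rw [← diagonal_sub, mul_sub, sub_mul, ← smul_one_eq_diagonal, Matrix.mul_smul, mul_one,
    Matrix.smul_mul, mul_nonsing_inv _ ((isUnit_iff_isUnit_det P).mp hP)]

theorem IsDiagonalizable.mulVec_eq_zero_of_mulVec_mulVec_eq_zero {A : Matrix n n K}
    (hA : A.IsDiagonalizable) {v : n → K} (hv : A *ᵥ (A *ᵥ v) = 0) : A *ᵥ v = 0 := by
  obtain ⟨P, D, hP, rfl⟩ := hA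
  have hPinv : P⁻¹ * P = 1 := nonsing_inv_mul P ((isUnit_iff_isUnit_det P).mp hP)
  have hinj : Function.Injective (P *ᵥ ·) := mulVec_injective_iff_isUnit.mpr hP
  have hconj : ∀ x, (P * diagonal D * P⁻¹) *ᵥ x = P *ᵥ (D * P⁻¹ *ᵥ x) := fun x => by
    rw [← mulVec_mulVec, ← mulVec_mulVec]
    congr 1
    funext i
    exact mulVec_diagonal _ _ _
  set w := P⁻¹ *ᵥ v
  have hD2w : D * (D * w) = 0 := by
    apply hinj
    change P *ᵥ _ = P *ᵥ 0
    rw [mulVec_zero, ← hv, hconj, hconj, mulVec_mulVec, hPinv, one_mulVec]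
  have hDw : D * w = 0 := by
    funext i
    simpa [← mul_assoc, ← sq] using congrFun hD2w i
  rw [hconj, hDw, mulVec_zero]

end Matrix

/-- The Hamiltonian matrix of `ξ₁² + ξ₂² + a x₁² + b x₂² + 2 G x₁ x₂`; `F` is the case
`a = ω₁²`, `b = ω₂²`, `G = i g`. -/
def oscillatorMatrix {R : Type*} [CommRing R] (a b G : R) : Matrix (Fin 4) (Fin 4) R :=
  !![0, 0, 1, 0; 0, 0, 0, 1; -a, -G, 0, 0; -G, -b, 0, 0]

theorem det_oscillatorMatrix_sub_smul_one {R : Type*} [CommRing R] (a b G lam : R) :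
    (oscillatorMatrix a b G - lam • 1).det =
      (lam ^ 2) ^ 2 + (a + b) * lam ^ 2 + (a * b - G ^ 2) := by
  have hsub : oscillatorMatrix a b G - lam • 1 =
      !![-lam, 0, 1, 0; 0, -lam, 0, 1; -a, -G, -lam, 0; -G, -b, 0, -lam] := by
    ext i j
    fin_cases i <;> fin_cases j <;> simp [oscillatorMatrix]
  rw [hsub, det_succ_row_zero]
  simp [Fin.sum_univ_succ, det_fin_three, Fin.succAbove, submatrix]
  ring

theorem det_oscillatorMatrix_sub_smul_one_eq_zero_iff {a b G s : ℂ}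
    (hs : s ^ 2 = (a - b) ^ 2 / 4 + G ^ 2) (lam : ℂ) :
    (oscillatorMatrix a b G - lam • 1).det = 0 ↔
      lam ^ 2 = -((a + b) / 2) + s ∨ lam ^ 2 = -((a + b) / 2) - s := by
  have hfactor : (oscillatorMatrix a b G - lam • 1).det =
      (lam ^ 2 - (-((a + b) / 2) + s)) * (lam ^ 2 - (-((a + b) / 2) - s)) := by
    rw [det_oscillatorMatrix_sub_smul_one]
    linear_combination hs
  rw [hfactor, mul_eq_zero, sub_eq_zero, sub_eq_zero]

theorem exists_injective_range_eq_roots_oscillatorMatrix {a b G s : ℂ}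
    (hs : s ^ 2 = (a - b) ^ 2 / 4 + G ^ 2) (hdisc : (a - b) ^ 2 + 4 * G ^ 2 ≠ 0)
    (hdet : a * b - G ^ 2 ≠ 0) :
    ∃ D : Fin 4 → ℂ, Function.Injective D ∧
      Set.range D = {lam | (oscillatorMatrix a b G - lam • 1).det = 0} := by
  obtain ⟨r, hr⟩ := IsAlgClosed.exists_pow_nat_eq (-((a + b) / 2) + s) two_pos
  obtain ⟨t, ht⟩ := IsAlgClosed.exists_pow_nat_eq (-((a + b) / 2) - s) two_pos
  have hprod : r ^ 2 * t ^ 2 = a * b - G ^ 2 := by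
    rw [hr, ht]
    linear_combination -hs
  have hr0 : r ≠ 0 := by rintro rfl; exact hdet (by simpa using hprod.symm)
  have ht0 : t ≠ 0 := by rintro rfl; exact hdet (by simpa using hprod.symm)
  have hrt2 : r ^ 2 ≠ t ^ 2 := by
    rw [hr, ht]
    intro h
    exact hdisc (by linear_combination (-4) * hs + 2 * s * h)
  refine ⟨![r, -r, t, -t], ?_, ?_⟩
  · obtain ⟨hrt, hrt', htr'⟩ : r ≠ t ∧ r ≠ -t ∧ t ≠ -r := by
      refine ⟨?_, ?_, ?_⟩ <;> rintro rfl <;> simp at hrt2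
    simp [Function.Injective, Fin.forall_fin_succ, self_eq_neg, neg_eq_self, neg_eq_iff_eq_neg,
      hr0, ht0, hrt, hrt', htr', hrt.symm, hrt'.symm, htr'.symm]
  · ext lam
    simp only [Set.mem_range, Set.mem_ofPred_eq, Fin.exists_fin_succ, Fin.exists_fin_zero]
    rw [det_oscillatorMatrix_sub_smul_one_eq_zero_iff hs, ← hr, ← ht,
      sq_eq_sq_iff_eq_or_eq_neg, sq_eq_sq_iff_eq_or_eq_neg]
    simp only [cons_val_zero, cons_val_one, cons_val, Fin.succ_zero_eq_one, Fin.succ_one_eq_two,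
      Fin.reduceSucc, or_false]
    tauto

theorem ncard_setOf_det_oscillatorMatrix_sub_smul_one_eq_zero {a b G s : ℂ}
    (hs : s ^ 2 = (a - b) ^ 2 / 4 + G ^ 2) (hdisc : (a - b) ^ 2 + 4 * G ^ 2 ≠ 0)
    (hdet : a * b - G ^ 2 ≠ 0) :
    {lam : ℂ | (oscillatorMatrix a b G - lam • 1).det = 0}.ncard = 4 := by
  obtain ⟨D, hD, hroots⟩ := exists_injective_range_eq_roots_oscillatorMatrix hs hdisc hdet
  rw [← hroots, Set.ncard_range_of_injective hD, Nat.card_fin]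

theorem not_isDiagonalizable_oscillatorMatrix {a b G : ℂ} (hab : a ≠ b)
    (hdisc : (a - b) ^ 2 + 4 * G ^ 2 = 0) : ¬ (oscillatorMatrix a b G).IsDiagonalizable := by
  intro hdiag
  obtain ⟨lam, hlam⟩ := IsAlgClosed.exists_pow_nat_eq (-((a + b) / 2)) two_pos
  set N := oscillatorMatrix a b G - lam • 1
  -- `N v = (u, λ u)`, where `u = (b - a, -2G)` is an eigenvector of `[[a, G], [G, b]]` for its
  -- double eigenvalue `(a + b) / 2 = -λ²`.
  have hNv : N *ᵥ ![4 * lam, 0, 4 * lam ^ 2 + (b - a), -2 * G] =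
      ![b - a, -2 * G, lam * (b - a), -2 * lam * G] := by
    ext i
    fin_cases i <;> simp [N, oscillatorMatrix, mulVec, dotProduct, Fin.sum_univ_four, one_apply]
    · ring
    · linear_combination (-4 * lam) * hlam
    · ring
  have hNNv : N *ᵥ ![b - a, -2 * G, lam * (b - a), -2 * lam * G] = 0 := by
    ext i
    fin_cases i <;> simp [N, oscillatorMatrix, mulVec, dotProduct, Fin.sum_univ_four, one_apply]
    · ring
    · linear_combination (a - b) * hlam + hdisc / 2
    · linear_combination 2 * G * hlam
  have hNv_eq_zero := (hdiag.sub_smul_one lam).mulVec_eq_zero_of_mulVec_mulVec_eq_zero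
    (by rw [hNv]; exact hNNv)
  rw [hNv] at hNv_eq_zero
  exact hab (sub_eq_zero.mp (congrFun hNv_eq_zero 0)).symm

theorem isDiagonalizable_oscillatorMatrix_iff {a b G : ℂ} (hab : a ≠ b)
    (hdet : a * b - G ^ 2 ≠ 0) :
    (oscillatorMatrix a b G).IsDiagonalizable ↔ (a - b) ^ 2 + 4 * G ^ 2 ≠ 0 := by
  refine ⟨fun hdiag hdisc => not_isDiagonalizable_oscillatorMatrix hab hdisc hdiag, fun hdisc => ?_⟩
  obtain ⟨s, hs⟩ := IsAlgClosed.exists_pow_nat_eq ((a - b) ^ 2 / 4 + G ^ 2) two_pos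
  obtain ⟨D, hD, hroots⟩ := exists_injective_range_eq_roots_oscillatorMatrix hs hdisc hdet
  exact isDiagonalizable_of_injective_of_det_sub_eq_zero _ D hD fun i =>
    hroots.subset (Set.mem_range_self i)

/-- the fundamental matrix `F` of the Cannata–Ioffe–Nishnianidze
oscillator is diagonalizable over `ℂ` iff `4g² ≠ (ω₁² − ω₂²)²`; in that case it has
four pairwise distinct eigenvalues `λ`, characterized by
`λ² = −(ω₁² + ω₂²)/2 ± ((ω₁² − ω₂²)²/4 − g²)^{1/2}`. -/
theorem stmt_17 (ω₁ ω₂ g : ℝ) (hω₁ : 0 < ω₁) (hω₂ : 0 < ω₂) (hne : ω₁ ≠ ω₂)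
    (F : Matrix (Fin 4) (Fin 4) ℂ)
    (hF : F = !![0, 0, 1, 0;
                 0, 0, 0, 1;
                 -(ω₁ : ℂ) ^ 2, -Complex.I * g, 0, 0;
                 -Complex.I * g, -(ω₂ : ℂ) ^ 2, 0, 0]) :
    ((∃ (P : Matrix (Fin 4) (Fin 4) ℂ) (D : Fin 4 → ℂ),
        IsUnit P ∧ F = P * Matrix.diagonal D * P⁻¹) ↔
      4 * g ^ 2 ≠ (ω₁ ^ 2 - ω₂ ^ 2) ^ 2) ∧
    (4 * g ^ 2 ≠ (ω₁ ^ 2 - ω₂ ^ 2) ^ 2 →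
      {lam : ℂ | (F - lam • 1).det = 0}.ncard = 4 ∧
      ∃ s : ℂ, s ^ 2 = (((ω₁ ^ 2 - ω₂ ^ 2) ^ 2 / 4 - g ^ 2 : ℝ) : ℂ) ∧
        ∀ lam : ℂ, (F - lam • 1).det = 0 ↔
          (lam ^ 2 = -(((ω₁ ^ 2 + ω₂ ^ 2) / 2 : ℝ) : ℂ) + s ∨
           lam ^ 2 = -(((ω₁ ^ 2 + ω₂ ^ 2) / 2 : ℝ) : ℂ) - s)) := by
  have hFosc : F = oscillatorMatrix ((ω₁ : ℂ) ^ 2) ((ω₂ : ℂ) ^ 2) (Complex.I * g) := by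
    rw [hF, oscillatorMatrix, neg_mul]
  have hab : (ω₁ : ℂ) ^ 2 ≠ (ω₂ : ℂ) ^ 2 := by
    exact_mod_cast (pow_left_inj₀ hω₁.le hω₂.le two_ne_zero).not.mpr hne
  have hdet : (ω₁ : ℂ) ^ 2 * (ω₂ : ℂ) ^ 2 - (Complex.I * g) ^ 2 ≠ 0 := by
    rw [show (ω₁ : ℂ) ^ 2 * (ω₂ : ℂ) ^ 2 - (Complex.I * g) ^ 2 =
        ((ω₁ ^ 2 * ω₂ ^ 2 + g ^ 2 : ℝ) : ℂ) by
      push_cast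
      linear_combination -(g : ℂ) ^ 2 * Complex.I_sq]
    exact_mod_cast (by positivity : 0 < ω₁ ^ 2 * ω₂ ^ 2 + g ^ 2).ne'
  have hdisc : ((ω₁ : ℂ) ^ 2 - (ω₂ : ℂ) ^ 2) ^ 2 + 4 * (Complex.I * g) ^ 2 ≠ 0 ↔
      4 * g ^ 2 ≠ (ω₁ ^ 2 - ω₂ ^ 2) ^ 2 := by
    rw [show ((ω₁ : ℂ) ^ 2 - (ω₂ : ℂ) ^ 2) ^ 2 + 4 * (Complex.I * g) ^ 2 =
        (((ω₁ ^ 2 - ω₂ ^ 2) ^ 2 - 4 * g ^ 2 : ℝ) : ℂ) by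
      push_cast
      linear_combination 4 * (g : ℂ) ^ 2 * Complex.I_sq]
    rw [ne_eq, Complex.ofReal_eq_zero, sub_eq_zero, eq_comm]
  obtain ⟨s, hs⟩ :=
    IsAlgClosed.exists_pow_nat_eq (((ω₁ ^ 2 - ω₂ ^ 2) ^ 2 / 4 - g ^ 2 : ℝ) : ℂ) two_pos
  have hs' : s ^ 2 = ((ω₁ : ℂ) ^ 2 - (ω₂ : ℂ) ^ 2) ^ 2 / 4 + (Complex.I * g) ^ 2 := by
    rw [hs]
    push_cast
    linear_combination -(g : ℂ) ^ 2 * Complex.I_sq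
  have hcenter : (((ω₁ ^ 2 + ω₂ ^ 2) / 2 : ℝ) : ℂ) = ((ω₁ : ℂ) ^ 2 + (ω₂ : ℂ) ^ 2) / 2 := by
    push_cast
    ring
  rw [hFosc, hcenter]
  refine ⟨(isDiagonalizable_oscillatorMatrix_iff hab hdet).trans hdisc, fun hcond =>
    ⟨ncard_setOf_det_oscillatorMatrix_sub_smul_one_eq_zero hs' (hdisc.mpr hcond) hdet, s, hs,
      det_oscillatorMatrix_sub_smul_one_eq_zero_iff hs'⟩⟩
end

section
/- Let ω₁, ω₂ be positive real numbers with ω₁ ≠ ω₂ and let g be real, and let F be the complex 4×4 matrix F = [[0,0,1,0],[0,0,0,1],[−ω₁²,−ig,0,0],[−ig,−ω₂²,0,0]]. Then every eigenvalue λ ∈ ℂ of F is purely imaginary (Re λ = 0) if and only if −|ω₁² − ω₂²| ≤ 2g ≤ |ω₁² − ω₂²|. Moreover every eigenvalue of F is nonzero. -/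
/-!
Expanding along rows, `det (F - λ) = (λ² + ω₁²)(λ² + ω₂²) + g²`, a quadratic in `μ = λ²`.
Since `Re λ = 0` exactly when `λ²` is a nonpositive real, the spectrum is purely imaginary iff
both roots `μ` are nonpositive reals. Comparing imaginary parts, a non-real root must have
`Re μ = -(ω₁² + ω₂²)/2` and then `(Im μ)² = g² - (ω₁² - ω₂²)²/4`; so non-real roots occur
exactly when `4g² > (ω₁² - ω₂²)²`, while real roots satisfy `(μ + ω₁²)(μ + ω₂²) = -g² ≤ 0` and
hence `μ ≤ 0`.
-/

open Matrix ComplexOrder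

theorem det_fin_four_block_sub_smul_one {R : Type*} [CommRing R] (a b c lam : R) :
    (!![0, 0, 1, 0; 0, 0, 0, 1; -a, c, 0, 0; c, -b, 0, 0] -
        lam • (1 : Matrix (Fin 4) (Fin 4) R)).det = (lam ^ 2 + a) * (lam ^ 2 + b) - c ^ 2 := by
  rw [det_succ_row_zero]
  simp [Fin.sum_univ_succ, det_succ_row_zero, Fin.succAbove, one_apply]
  ring

theorem nonpos_of_quadratic_eq_zero {a b g : ℝ} (ha : 0 ≤ a) (hb : 0 ≤ b)
    (hg : (2 * g) ^ 2 ≤ (a - b) ^ 2) {μ : ℂ} (hμ : (μ + a) * (μ + b) + g ^ 2 = 0) : μ ≤ 0 := by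
  have hre : (μ.re + a) * (μ.re + b) - μ.im ^ 2 + g ^ 2 = 0 := by
    simpa [sq, ← Complex.ofReal_pow] using congrArg Complex.re hμ
  have him : μ.im * (2 * μ.re + a + b) = 0 := by
    have := congrArg Complex.im hμ
    simp [sq] at this
    linear_combination this
  have him0 : μ.im = 0 := by
    by_contra hne
    have hmid : 2 * μ.re + a + b = 0 := (mul_eq_zero.mp him).resolve_left hne
    have hsq : 4 * μ.im ^ 2 = (2 * g) ^ 2 - (a - b) ^ 2 := by
      linear_combination -4 * hre + (2 * μ.re + a + b) * hmid
    have : 0 < μ.im ^ 2 := by positivity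
    linarith
  rw [Complex.nonpos_iff]
  refine ⟨?_, him0⟩
  rw [him0] at hre
  nlinarith [sq_nonneg g]

theorem exists_quadratic_eq_zero_im_ne_zero {a b g : ℝ} (hg : (a - b) ^ 2 < (2 * g) ^ 2) :
    ∃ μ : ℂ, (μ + a) * (μ + b) + g ^ 2 = 0 ∧ μ.im ≠ 0 := by
  set t := √((2 * g) ^ 2 - (a - b) ^ 2)
  have ht : t ^ 2 = (2 * g) ^ 2 - (a - b) ^ 2 := Real.sq_sqrt (by linarith)
  have htpos : 0 < t := Real.sqrt_pos.mpr (by linarith)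
  refine ⟨⟨-(a + b) / 2, t / 2⟩, ?_, by simp [htpos.ne']⟩
  apply Complex.ext <;> simp [sq] <;> nlinarith

theorem quadratic_roots_nonpos_iff {a b g : ℝ} (ha : 0 ≤ a) (hb : 0 ≤ b) :
    (∀ μ : ℂ, (μ + a) * (μ + b) + g ^ 2 = 0 → μ ≤ 0) ↔ (2 * g) ^ 2 ≤ (a - b) ^ 2 := by
  refine ⟨fun h => ?_, fun hg μ => nonpos_of_quadratic_eq_zero ha hb hg⟩
  by_contra! hg
  obtain ⟨μ, hμ, him⟩ := exists_quadratic_eq_zero_im_ne_zero hg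
  exact him (Complex.nonpos_iff.mp (h μ hμ)).2

theorem stmt_18_general (ω₁ ω₂ g : ℝ) (hω₁ : 0 < ω₁) (hω₂ : 0 < ω₂)
    (F : Matrix (Fin 4) (Fin 4) ℂ)
    (hF : F = !![0, 0, 1, 0;
                 0, 0, 0, 1;
                 -(ω₁ : ℂ) ^ 2, -Complex.I * g, 0, 0;
                 -Complex.I * g, -(ω₂ : ℂ) ^ 2, 0, 0]) :
    ((∀ lam : ℂ, (F - lam • 1).det = 0 → lam.re = 0) ↔
      (-|ω₁ ^ 2 - ω₂ ^ 2| ≤ 2 * g ∧ 2 * g ≤ |ω₁ ^ 2 - ω₂ ^ 2|)) ∧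
    (∀ lam : ℂ, (F - lam • 1).det = 0 → lam ≠ 0) := by
  have hdet (lam : ℂ) : (F - lam • 1).det
      = (lam ^ 2 + ↑(ω₁ ^ 2)) * (lam ^ 2 + ↑(ω₂ ^ 2)) + (g : ℂ) ^ 2 := by
    rw [hF, det_fin_four_block_sub_smul_one]
    push_cast
    linear_combination -(g : ℂ) ^ 2 * Complex.I_sq
  simp only [hdet]
  refine ⟨?_, fun lam hlam h0 => ?_⟩
  · calc (∀ lam : ℂ, _ → lam.re = 0)
        ↔ ∀ μ : ℂ, (μ + ↑(ω₁ ^ 2)) * (μ + ↑(ω₂ ^ 2)) + (g : ℂ) ^ 2 = 0 → μ ≤ 0 := by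
          simp only [← Complex.sq_nonpos_iff]
          exact ⟨fun h μ => by
            obtain ⟨lam, rfl⟩ := IsAlgClosed.exists_pow_nat_eq μ two_pos; exact h lam,
            fun h lam => h _⟩
      _ ↔ (2 * g) ^ 2 ≤ (ω₁ ^ 2 - ω₂ ^ 2) ^ 2 :=
          quadratic_roots_nonpos_iff (by positivity) (by positivity)
      _ ↔ _ := by rw [sq_le_sq, abs_le]
  · subst h0
    have : ((ω₁ ^ 2 * ω₂ ^ 2 + g ^ 2 : ℝ) : ℂ) = 0 := by simpa using hlam
    exact absurd this (by positivity)

/-- all eigenvalues of the fundamental matrix `F` of the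
Cannata–Ioffe–Nishnianidze oscillator are purely imaginary iff
`−|ω₁² − ω₂²| ≤ 2g ≤ |ω₁² − ω₂²|`; moreover every eigenvalue of `F` is nonzero. -/
theorem stmt_18 (ω₁ ω₂ g : ℝ) (hω₁ : 0 < ω₁) (hω₂ : 0 < ω₂) (hne : ω₁ ≠ ω₂)
    (F : Matrix (Fin 4) (Fin 4) ℂ)
    (hF : F = !![0, 0, 1, 0;
                 0, 0, 0, 1;
                 -(ω₁ : ℂ) ^ 2, -Complex.I * g, 0, 0;
                 -Complex.I * g, -(ω₂ : ℂ) ^ 2, 0, 0]) :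
    ((∀ lam : ℂ, (F - lam • 1).det = 0 → lam.re = 0) ↔
      (-|ω₁ ^ 2 - ω₂ ^ 2| ≤ 2 * g ∧ 2 * g ≤ |ω₁ ^ 2 - ω₂ ^ 2|)) ∧
    (∀ lam : ℂ, (F - lam • 1).det = 0 → lam ≠ 0) :=
  stmt_18_general ω₁ ω₂ g hω₁ hω₂ F hF
end

section
/- Let ω₁, ω₂ be positive real numbers with ω₁ ≠ ω₂ and let g be real with 2g = ω₁² − ω₂² or 2g = −(ω₁² − ω₂²), and let F be the complex 4×4 matrix F = [[0,0,1,0],[0,0,0,1],[−ω₁²,−ig,0,0],[−ig,−ω₂²,0,0]]. Set λ₊ = i·((ω₁² + ω₂²)/2)^{1/2}. Then λ₊ is an eigenvalue of F of algebraic multiplicity two, the matrix F − λ₊I has rank 3 (so the eigenspace ker(F − λ₊) is one-dimensional), and consequently F is not diagonalizable over ℂ, i.e. F has a Jordan block at λ₊. -/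
/-!
Put `λ = lamPlus`, so `λ² = -(ω₁² + ω₂²)/2`. The characteristic polynomial of `F` is
`X⁴ + (ω₁² + ω₂²) X² + ω₁²ω₂² + g²`, and at the exceptional coupling it is the square
`(X² - λ²)²`, so `λ` is a double root. An eigenvector of `F` for `λ` has the form `(x, λx)` with
`V x = -λ² x` for the potential `V = [[ω₁², ig], [ig, ω₂²]]`, and this eigenspace of `V` is the
single line through the isotropic vector `(1, ±i)`. So the algebraic and geometric multiplicities
of `λ` are `2` and `1`, whereas they agree for every diagonalizable matrix.
-/

open Matrix Polynomial Finset

section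

variable {K : Type*} [Field K] {n : Type*} [Fintype n]

theorem Polynomial.rootMultiplicity_prod_X_sub_C [DecidableEq K] (D : n → K) (μ : K) :
    rootMultiplicity μ (∏ i, (X - C (D i))) = #{i | D i = μ} := by
  have hroots : (∏ i, (X - C (D i))).roots = univ.val.map D := by
    rw [prod_eq_multiset_prod, ← roots_multiset_prod_X_sub_C (univ.val.map D), Multiset.map_map]
    rfl
  rw [← count_roots, hroots, Multiset.count_map]
  simp_rw [eq_comm (a := μ)]
  rfl

theorem Matrix.rootMultiplicity_charpoly_add_rank_of_isUnit_conj_diagonal [DecidableEq n]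
    {F P : Matrix n n K} {D : n → K} (hP : IsUnit P) (hF : F = P * diagonal D * P⁻¹) (μ : K) :
    rootMultiplicity μ F.charpoly + (F - μ • 1).rank = Fintype.card n := by
  classical
  have hdet : IsUnit P.det := (isUnit_iff_isUnit_det P).mp hP
  have hcharpoly : F.charpoly = ∏ i, (X - C (D i)) := by
    rw [hF, ← hP.unit_spec, charpoly_units_conj, charpoly_diagonal]
  have hsub : F - μ • 1 = P * diagonal (fun i => D i - μ) * P⁻¹ := by
    rw [hF, ← diagonal_sub, ← smul_one_eq_diagonal, mul_sub, sub_mul, Matrix.mul_smul, mul_one,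
      Matrix.smul_mul, mul_nonsing_inv P hdet]
  have hrank : (F - μ • 1).rank = #{i | D i ≠ μ} := by
    rw [hsub, rank_mul_eq_left_of_isUnit_det _ _ (isUnit_nonsing_inv_det P hdet),
      rank_mul_eq_right_of_isUnit_det _ _ hdet, rank_diagonal, Fintype.card_subtype]
    simp only [sub_ne_zero]
  rw [hcharpoly, rootMultiplicity_prod_X_sub_C, hrank, card_filter_add_card_filter_not, card_univ]

end

/-- The fundamental matrix `[[0, 1], [-V, 0]]` of `ξ₁² + ξ₂² + a x₁² + b x₂² - 2c x₁x₂`, whose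
potential matrix is `V = [[a, -c], [-c, b]]`. -/
def fundamentalMatrix {R : Type*} [Ring R] (a b c : R) : Matrix (Fin 4) (Fin 4) R :=
  !![0, 0, 1, 0; 0, 0, 0, 1; -a, c, 0, 0; c, -b, 0, 0]

theorem fundamentalMatrix_mulVec {R : Type*} [CommRing R] (a b c : R) (x : Fin 4 → R) :
    fundamentalMatrix a b c *ᵥ x = ![x 2, x 3, -a * x 0 + c * x 1, c * x 0 - b * x 1] := by
  ext i
  fin_cases i <;> simp [fundamentalMatrix, mulVec, dotProduct, Fin.sum_univ_four, sub_eq_add_neg]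

theorem charpoly_fundamentalMatrix {R : Type*} [CommRing R] (a b c : R) :
    (fundamentalMatrix a b c).charpoly = X ^ 4 + C (a + b) * X ^ 2 + C (a * b - c ^ 2) := by
  have hcharmatrix : charmatrix (fundamentalMatrix a b c)
      = !![X, 0, -1, 0; 0, X, 0, -1; C a, -C c, X, 0; -C c, C b, 0, X] := by
    ext i j
    fin_cases i <;> fin_cases j <;> simp [fundamentalMatrix]
  rw [Matrix.charpoly, hcharmatrix, det_succ_row_zero]
  simp [Fin.sum_univ_succ, det_fin_three, Fin.succAbove]
  ring

namespace fundamentalMatrix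

/- The hypotheses say that `(1, e)` is an eigenvector of `V` for `-l²`. It is isotropic
(`1 + e² = 0`), which is what makes the eigenvalue `l` of `F` defective. -/
variable {K : Type*} [Field K] {a b c e l : K}
  (he : e ^ 2 = -1) (ha : a + l ^ 2 = c * e) (hb : b + l ^ 2 = -(c * e))
include he ha hb

theorem charpoly_eq :
    (fundamentalMatrix a b c).charpoly = (X - C l) ^ 2 * (X + C l) ^ 2 := by
  have hsum : a + b = -(2 * l ^ 2) := by linear_combination ha + hb
  have hprod : a * b - c ^ 2 = l ^ 4 := by
    linear_combination b * ha + (c * e - l ^ 2) * hb - c ^ 2 * he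
  rw [charpoly_fundamentalMatrix, hsum, hprod]
  simp only [map_neg, map_mul, map_pow, map_ofNat]
  ring

theorem rootMultiplicity_charpoly [NeZero (2 : K)] (hl₀ : l ≠ 0) :
    rootMultiplicity l (fundamentalMatrix a b c).charpoly = 2 := by
  have hne : (X - C l) ^ 2 * (X + C l) ^ 2 ≠ 0 := by
    rw [← charpoly_eq he ha hb]
    exact (charpoly_monic _).ne_zero
  have hnot_root : ¬ IsRoot ((X + C l) ^ 2) l := by
    simpa [← two_mul, two_ne_zero] using hl₀
  rw [charpoly_eq he ha hb, rootMultiplicity_mul hne, rootMultiplicity_X_sub_C_pow,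
    rootMultiplicity_eq_zero hnot_root]

theorem ker_sub_smul_one (hc : c ≠ 0) :
    LinearMap.ker (mulVecLin (fundamentalMatrix a b c - l • 1)) = K ∙ ![1, e, l, e * l] := by
  ext x
  rw [LinearMap.mem_ker, mulVecLin_apply, sub_mulVec, smul_mulVec, one_mulVec, sub_eq_zero,
    fundamentalMatrix_mulVec, Submodule.mem_span_singleton]
  constructor
  · intro h
    have h0 : x 2 = l * x 0 := by simpa using congrFun h 0
    have h1 : x 3 = l * x 1 := by simpa using congrFun h 1
    have h2 : -a * x 0 + c * x 1 = l * x 2 := by simpa using congrFun h 2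
    have hx1 : x 1 = e * x 0 :=
      mul_left_cancel₀ hc (by linear_combination h2 + l * h0 + x 0 * ha)
    refine ⟨x 0, ?_⟩
    ext i
    fin_cases i <;> simp
    · linear_combination -hx1
    · linear_combination -h0
    · linear_combination -h1 - l * hx1
  · rintro ⟨t, rfl⟩
    ext i
    fin_cases i <;> simp
    · ring
    · ring
    · linear_combination -t * ha
    · linear_combination t * c * he - t * e * hb

theorem finrank_ker_sub_smul_one (hc : c ≠ 0) :
    Module.finrank K (LinearMap.ker (mulVecLin (fundamentalMatrix a b c - l • 1))) = 1 := by
  rw [ker_sub_smul_one he ha hb hc]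
  exact finrank_span_singleton fun h => one_ne_zero (α := K) (by simpa using congrFun h 0)

theorem rank_sub_smul_one (hc : c ≠ 0) :
    (fundamentalMatrix a b c - l • 1).rank = 3 := by
  have := LinearMap.finrank_range_add_finrank_ker (mulVecLin (fundamentalMatrix a b c - l • 1))
  rw [finrank_ker_sub_smul_one he ha hb hc, Module.finrank_fin_fun] at this
  rw [Matrix.rank]
  omega

end fundamentalMatrix

theorem exists_sq_eq_neg_one_and_coupling_mul_eq {ω₁ ω₂ g : ℝ}
    (hg : 2 * g = ω₁ ^ 2 - ω₂ ^ 2 ∨ 2 * g = -(ω₁ ^ 2 - ω₂ ^ 2)) :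
    ∃ e : ℂ, e ^ 2 = -1 ∧ -Complex.I * g * e = ((ω₁ : ℂ) ^ 2 - (ω₂ : ℂ) ^ 2) / 2 := by
  rcases hg with h | h
  · have hC : (2 * g : ℂ) = (ω₁ : ℂ) ^ 2 - (ω₂ : ℂ) ^ 2 := by exact_mod_cast h
    exact ⟨Complex.I, Complex.I_sq, by linear_combination -(g : ℂ) * Complex.I_sq + hC / 2⟩
  · have hC : (2 * g : ℂ) = -((ω₁ : ℂ) ^ 2 - (ω₂ : ℂ) ^ 2) := by exact_mod_cast h
    exact ⟨-Complex.I, by simp, by linear_combination (g : ℂ) * Complex.I_sq - hC / 2⟩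

open fundamentalMatrix in
/-- at the exceptional coupling `2g = ±(ω₁² − ω₂²)`, the value
`λ₊ = i((ω₁² + ω₂²)/2)^{1/2}` is an eigenvalue of `F` of algebraic multiplicity two,
`F − λ₊I` has rank 3 (so the eigenspace `ker(F − λ₊)` is one-dimensional), and `F` is
not diagonalizable over `ℂ`, i.e. `F` has a Jordan block at `λ₊`. -/
theorem stmt_19 (ω₁ ω₂ g : ℝ) (hω₁ : 0 < ω₁) (hω₂ : 0 < ω₂) (hne : ω₁ ≠ ω₂)
    (hg : 2 * g = ω₁ ^ 2 - ω₂ ^ 2 ∨ 2 * g = -(ω₁ ^ 2 - ω₂ ^ 2))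
    (F : Matrix (Fin 4) (Fin 4) ℂ)
    (hF : F = !![0, 0, 1, 0;
                 0, 0, 0, 1;
                 -(ω₁ : ℂ) ^ 2, -Complex.I * g, 0, 0;
                 -Complex.I * g, -(ω₂ : ℂ) ^ 2, 0, 0])
    (lamPlus : ℂ)
    (hlam : lamPlus = Complex.I * Real.sqrt ((ω₁ ^ 2 + ω₂ ^ 2) / 2)) :
    Polynomial.rootMultiplicity lamPlus F.charpoly = 2 ∧
    (F - lamPlus • 1).rank = 3 ∧
    Module.finrank ℂ (LinearMap.ker (Matrix.mulVecLin (F - lamPlus • 1))) = 1 ∧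
    ¬∃ (P : Matrix (Fin 4) (Fin 4) ℂ) (D : Fin 4 → ℂ),
        IsUnit P ∧ F = P * Matrix.diagonal D * P⁻¹ := by
  replace hF : F = fundamentalMatrix ((ω₁ : ℂ) ^ 2) ((ω₂ : ℂ) ^ 2) (-Complex.I * g) := hF
  subst hF
  have hr : 0 < (ω₁ ^ 2 + ω₂ ^ 2) / 2 := by positivity
  have hl₀ : lamPlus ≠ 0 := by
    rw [hlam]
    exact mul_ne_zero Complex.I_ne_zero (by exact_mod_cast (Real.sqrt_pos.mpr hr).ne')
  have hl2 : lamPlus ^ 2 = -(((ω₁ : ℂ) ^ 2 + (ω₂ : ℂ) ^ 2) / 2) := by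
    rw [hlam, mul_pow, Complex.I_sq, ← Complex.ofReal_pow, Real.sq_sqrt hr.le]
    push_cast
    ring
  obtain ⟨e, he, hce⟩ := exists_sq_eq_neg_one_and_coupling_mul_eq hg
  have hc : -Complex.I * g ≠ 0 := by
    intro h0
    rw [h0, zero_mul, eq_comm, div_eq_zero_iff, sub_eq_zero] at hce
    have hsq : ω₁ ^ 2 = ω₂ ^ 2 := by exact_mod_cast hce.resolve_right two_ne_zero
    exact hne ((pow_left_inj₀ hω₁.le hω₂.le two_ne_zero).mp hsq)
  have ha : (ω₁ : ℂ) ^ 2 + lamPlus ^ 2 = -Complex.I * g * e := by linear_combination hl2 - hce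
  have hb : (ω₂ : ℂ) ^ 2 + lamPlus ^ 2 = -(-Complex.I * g * e) := by linear_combination hl2 + hce
  have hmult := rootMultiplicity_charpoly he ha hb hl₀
  have hrank := rank_sub_smul_one he ha hb hc
  refine ⟨hmult, hrank, finrank_ker_sub_smul_one he ha hb hc, ?_⟩
  rintro ⟨P, D, hP, hPD⟩
  have hsum := Matrix.rootMultiplicity_charpoly_add_rank_of_isUnit_conj_diagonal hP hPD lamPlus
  rw [hmult, hrank, Fintype.card_fin] at hsum
  omega
end
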